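/- arXiv:1908.06076 — 4 statements merged into one kernel-verified Lean document; each statement's English description precedes it below -/
import Mathlib

section
/- Let n ≥ 1 and let V be an n × n unitary matrix all of whose entries lie in the ring ℤ[1/2] of dyadic fractions. Then there exist finitely many generators G₁, …, G_ℓ, each taken from the set {(-1)_[a], X_[a,b], (H⊗H)_[a,b,c,d] : a, b, c, d distinct elements of {1,…,n}}, such that G₁ ⋯ G_ℓ V = I. -/
/-!
Work column by column. Once the first `m` columns of `V` are `e₀, …, e_{m-1}`, unitarity forces
column `m` to be `w / 2^k` with `w` integral, `∑ wᵢ² = 4^k` and `wᵢ = 0` for `i < m`. If `k > 0`,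
the number of odd `wᵢ` is divisible by `4`, odd squares being `1 mod 4`. After `(-1)_[a]` has made
every odd entry `1 mod 4`, `H⊗H` at four odd positions replaces them by even numbers, so the odd
entries can be cleared and then `k` lowered. At `k = 0` the column is `±e_a` with `a ≥ m`, and
`(-1)_[a]`, `X_[a,m]` turn it into `e_m`. Every generator used acts on indices `≥ m` only, so the
finished columns are kept.
-/

open Matrix Complex

noncomputable section

/-- The `m`-level operator of type `W` with indices `f 0, …, f (m-1)`:
for injective `f`, its `(f j', f k')` entry is `W j' k'` and it agrees
with the identity matrix elsewhere. -/
def levelOp {n m : ℕ} (f : Fin m → Fin n) (W : Matrix (Fin m) (Fin m) ℂ) :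
    Matrix (Fin n) (Fin n) ℂ := fun j k =>
  (∑ j' : Fin m, ∑ k' : Fin m, if f j' = j ∧ f k' = k then W j' k' else 0) +
  (if j = k ∧ ∀ j' : Fin m, f j' ≠ j then 1 else 0)

/-- The NOT gate `X`. -/
def Xmat : Matrix (Fin 2) (Fin 2) ℂ := !![0, 1; 1, 0]

/-- The Hadamard gate `H`. -/
def Hmat : Matrix (Fin 2) (Fin 2) ℂ := (Real.sqrt 2 : ℂ)⁻¹ • !![1, 1; 1, -1]

/-- The Kronecker product `H ⊗ H`, a 4×4 matrix. -/
def HHmat : Matrix (Fin 4) (Fin 4) ℂ :=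
  (2 : ℂ)⁻¹ • !![1, 1, 1, 1; 1, -1, 1, -1; 1, 1, -1, -1; 1, -1, -1, 1]

/-- `G` is one of the generators `(-1)_[a]`, `X_[a,b]`, `(H⊗H)_[a,b,c,d]`
with `a, b, c, d` distinct. -/
def IsIntGen {n : ℕ} (G : Matrix (Fin n) (Fin n) ℂ) : Prop :=
  (∃ a : Fin n, G = levelOp ![a] !![-1]) ∨
  (∃ a b : Fin n, a ≠ b ∧ G = levelOp ![a, b] Xmat) ∨
  (∃ a b c d : Fin n, a ≠ b ∧ a ≠ c ∧ a ≠ d ∧ b ≠ c ∧ b ≠ d ∧ c ≠ d ∧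
    G = levelOp ![a, b, c, d] HHmat)

/-- `x` is a dyadic fraction: an element of `ℤ[1/2]` (viewed inside `ℂ`). -/
def IsDyadic (x : ℂ) : Prop := ∃ (u : ℤ) (q : ℕ), x = (u : ℂ) / 2 ^ q

lemma Function.extend_extend {α β γ : Type*} (f : α → β) (g g' : α → γ) (e : β → γ) :
    Function.extend f g (Function.extend f g' e) = Function.extend f g e := by
  ext b
  by_cases hb : ∃ a, f a = b
  · classical
    simp only [Function.extend_def, hb, dif_pos]
  · rw [Function.extend_apply' _ _ _ hb, Function.extend_apply' _ _ _ hb,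
      Function.extend_apply' _ _ _ hb]

section LevelOp

variable {n m : ℕ} {f : Fin m → Fin n}

lemma levelOp_apply_of_notMem_left (W : Matrix (Fin m) (Fin m) ℂ) {i : Fin n}
    (hi : i ∉ Set.range f) (j : Fin n) :
    levelOp f W i j = (1 : Matrix (Fin n) (Fin n) ℂ) i j := by
  simp only [Set.mem_range, not_exists] at hi
  simp [levelOp, hi, Matrix.one_apply]

lemma levelOp_apply_of_notMem_right (W : Matrix (Fin m) (Fin m) ℂ) (i : Fin n) {j : Fin n}
    (hj : j ∉ Set.range f) : levelOp f W i j = (1 : Matrix (Fin n) (Fin n) ℂ) i j := by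
  simp only [Set.mem_range, not_exists] at hj
  by_cases hij : i = j
  · subst hij; simp [levelOp, hj]
  · simp [levelOp, hj, hij]

lemma levelOp_conjTranspose (W : Matrix (Fin m) (Fin m) ℂ) :
    (levelOp f W)ᴴ = levelOp f Wᴴ := by
  ext i j
  simp only [conjTranspose_apply, levelOp, star_add, star_sum, apply_ite star, star_zero,
    star_one]
  rw [Finset.sum_comm]
  congr 1
  · simp only [and_comm]
  · by_cases h : i = j
    · subst h; rfl
    · simp [h, Ne.symm h]

lemma levelOp_mulVec (hf : Function.Injective f) (W : Matrix (Fin m) (Fin m) ℂ)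
    (v : Fin n → ℂ) : levelOp f W *ᵥ v = Function.extend f (W *ᵥ (v ∘ f)) v := by
  ext i
  by_cases hi : ∃ p, f p = i
  · obtain ⟨p, rfl⟩ := hi
    rw [hf.extend_apply]
    simp only [mulVec, dotProduct, levelOp, hf.eq_iff, ite_and, Finset.sum_ite_irrel,
      Finset.sum_const_zero, Finset.sum_ite_eq', Finset.mem_univ, ↓reduceIte, ne_eq, forall_eq,
      and_false, add_zero, Finset.sum_mul, ite_mul, zero_mul, Function.comp_apply]
    rw [Finset.sum_comm]
    simp
  · rw [Function.extend_apply' _ _ _ hi]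
    simp only [mulVec, dotProduct]
    rw [Finset.sum_eq_single i]
    · rw [levelOp_apply_of_notMem_left W hi, one_apply_eq, one_mul]
    · intro j _ hj
      rw [levelOp_apply_of_notMem_left W hi, one_apply_ne (Ne.symm hj), zero_mul]
    · simp

lemma levelOp_one (hf : Function.Injective f) :
    levelOp f (1 : Matrix (Fin m) (Fin m) ℂ) = 1 := by
  refine ext_iff_mulVec.mpr fun v => ?_
  ext i
  by_cases hi : ∃ p, f p = i
  · obtain ⟨p, rfl⟩ := hi
    simp [levelOp_mulVec hf, hf.extend_apply]
  · simp [levelOp_mulVec hf, Function.extend_apply' _ _ _ hi]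

lemma levelOp_mul (hf : Function.Injective f) (A B : Matrix (Fin m) (Fin m) ℂ) :
    levelOp f A * levelOp f B = levelOp f (A * B) := by
  refine ext_iff_mulVec.mpr fun v => ?_
  rw [← mulVec_mulVec, levelOp_mulVec hf, levelOp_mulVec hf, levelOp_mulVec hf,
    Function.extend_comp hf, mulVec_mulVec, Function.extend_extend]

lemma levelOp_mem_unitaryGroup (hf : Function.Injective f) {W : Matrix (Fin m) (Fin m) ℂ}
    (hW : W ∈ unitaryGroup (Fin m) ℂ) : levelOp f W ∈ unitaryGroup (Fin n) ℂ := by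
  rw [mem_unitaryGroup_iff', star_eq_conjTranspose, levelOp_conjTranspose, levelOp_mul hf,
    ← star_eq_conjTranspose, mem_unitaryGroup_iff'.mp hW, levelOp_one hf]

lemma levelOp_mem_matrix (S : Subring ℂ) {W : Matrix (Fin m) (Fin m) ℂ} (hW : W ∈ S.matrix) :
    levelOp f W ∈ S.matrix := fun i j =>
  add_mem (sum_mem fun p _ => sum_mem fun q _ => by split_ifs; exacts [hW p q, zero_mem S])
    (by split_ifs; exacts [one_mem S, zero_mem S])

end LevelOp

def dyadicSubring : Subring ℂ where
  carrier := {x | IsDyadic x}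
  mul_mem' := by
    rintro _ _ ⟨u, q, rfl⟩ ⟨v, r, rfl⟩
    exact ⟨u * v, q + r, by push_cast; ring⟩
  one_mem' := ⟨1, 0, by simp⟩
  add_mem' := by
    rintro _ _ ⟨u, q, rfl⟩ ⟨v, r, rfl⟩
    refine ⟨u * 2 ^ r + v * 2 ^ q, q + r, ?_⟩
    field_simp
    push_cast
    ring
  zero_mem' := ⟨0, 0, by simp⟩
  neg_mem' := by
    rintro _ ⟨u, q, rfl⟩
    exact ⟨-u, q, by push_cast; ring⟩

lemma star_mulVec_dotProduct_mulVec {ι α : Type*} [Fintype ι] [DecidableEq ι] [CommRing α]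
    [StarRing α] {U : Matrix ι ι α} (hU : U ∈ unitaryGroup ι α) (v : ι → α) :
    star (U *ᵥ v) ⬝ᵥ (U *ᵥ v) = star v ⬝ᵥ v := by
  rw [star_mulVec, ← dotProduct_mulVec, mulVec_mulVec, ← star_eq_conjTranspose,
    mem_unitaryGroup_iff'.mp hU, one_mulVec]

section Generators

variable {n : ℕ}

lemma neg_one_mem_unitaryGroup : !![(-1 : ℂ)] ∈ unitaryGroup (Fin 1) ℂ := by
  rw [mem_unitaryGroup_iff']
  ext i j
  fin_cases i; fin_cases j
  simp [mul_apply]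

lemma Xmat_mem_unitaryGroup : Xmat ∈ unitaryGroup (Fin 2) ℂ := by
  rw [mem_unitaryGroup_iff']
  ext i j
  fin_cases i <;> fin_cases j <;> simp [Xmat, mul_apply]

lemma HHmat_mem_unitaryGroup : HHmat ∈ unitaryGroup (Fin 4) ℂ := by
  rw [mem_unitaryGroup_iff']
  ext i j
  fin_cases i <;> fin_cases j <;>
    simp [HHmat, mul_apply, Fin.sum_univ_four, Complex.conj_ofNat] <;> norm_num

lemma HHmat_mem_matrix_dyadicSubring : HHmat ∈ dyadicSubring.matrix := by
  intro i j
  have h : (2 : ℂ)⁻¹ ∈ dyadicSubring := ⟨1, 1, by simp⟩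
  fin_cases i <;> fin_cases j <;> simp [HHmat, h]

lemma IsIntGen.exists_levelOp {G : Matrix (Fin n) (Fin n) ℂ} (hG : IsIntGen G) :
    ∃ (m : ℕ) (f : Fin m → Fin n) (W : Matrix (Fin m) (Fin m) ℂ), Function.Injective f ∧
      W ∈ unitaryGroup (Fin m) ℂ ∧ W ∈ dyadicSubring.matrix ∧ G = levelOp f W := by
  rcases hG with ⟨a, rfl⟩ | ⟨a, b, hab, rfl⟩ | ⟨a, b, c, d, hab, hac, had, hbc, hbd, hcd, rfl⟩
  · refine ⟨1, _, _, fun p q _ => Subsingleton.elim p q, neg_one_mem_unitaryGroup, ?_, rfl⟩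
    intro i j
    fin_cases i; fin_cases j
    simp [one_mem]
  · refine ⟨2, _, _, ?_, Xmat_mem_unitaryGroup, ?_, rfl⟩
    · intro p q
      fin_cases p <;> fin_cases q <;> simp [hab, hab.symm]
    · intro i j
      fin_cases i <;> fin_cases j <;> simp [Xmat, one_mem, zero_mem]
  · refine ⟨4, _, _, ?_, HHmat_mem_unitaryGroup, HHmat_mem_matrix_dyadicSubring, rfl⟩
    intro p q
    fin_cases p <;> fin_cases q <;> simp [*, Ne.symm]

variable (n) in
def intGenMonoid : Submonoid (Matrix (Fin n) (Fin n) ℂ) := Submonoid.closure {G | IsIntGen G}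

lemma intGenMonoid_le_unitaryGroup : intGenMonoid n ≤ unitaryGroup (Fin n) ℂ :=
  Submonoid.closure_le.mpr fun _ hG => by
    obtain ⟨_, _, _, hf, hW, -, rfl⟩ := IsIntGen.exists_levelOp hG
    exact levelOp_mem_unitaryGroup hf hW

lemma intGenMonoid_le_matrix_dyadicSubring :
    intGenMonoid n ≤ (dyadicSubring.matrix : Subring (Matrix (Fin n) (Fin n) ℂ)).toSubmonoid :=
  Submonoid.closure_le.mpr fun _ hG => by
    obtain ⟨_, _, _, -, -, hW, rfl⟩ := IsIntGen.exists_levelOp hG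
    exact levelOp_mem_matrix dyadicSubring hW

end Generators

section IntegerVectors

open Finset

variable {ι : Type*}

lemma four_dvd_card_odd_of_four_dvd_sum_sq [Fintype ι] (w : ι → ℤ) (h : 4 ∣ ∑ i, w i ^ 2) :
    4 ∣ #{i | Odd (w i)} := by
  have hsq : ∀ x : ℤ, ((x ^ 2 : ℤ) : ZMod 4) = if Odd x then 1 else 0 := by
    intro x
    rw [← ZMod.intCast_mod]
    split_ifs with hx
    · rw [Nat.cast_ofNat, Int.sq_mod_four_eq_one_of_odd hx, Int.cast_one]
    · obtain ⟨t, rfl⟩ := Int.not_odd_iff_even.mp hx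
      rw [show (t + t) ^ 2 = 4 * t ^ 2 by ring, Nat.cast_ofNat, Int.mul_emod_right,
        Int.cast_zero]
  rw [← ZMod.natCast_eq_zero_iff, natCast_card_filter]
  simp_rw [← hsq, ← Int.cast_sum]
  exact (ZMod.intCast_zmod_eq_zero_iff_dvd _ 4).mpr h

lemma exists_sq_eq_one_of_sum_sq_eq_one [Fintype ι] [DecidableEq ι] (w : ι → ℤ)
    (h : ∑ i, w i ^ 2 = 1) :
    ∃ a, w a ^ 2 = 1 ∧ ∀ j ≠ a, w j = 0 := by
  obtain ⟨a, ha⟩ : ∃ a, w a ≠ 0 := by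
    by_contra! h0
    simp [h0] at h
  have hsplit := Finset.add_sum_erase univ (fun i => w i ^ 2) (mem_univ a)
  have hrest : 0 ≤ ∑ j ∈ univ.erase a, w j ^ 2 := sum_nonneg fun j _ => sq_nonneg (w j)
  have hpos : 0 < w a ^ 2 := by positivity
  have hrest0 : ∑ j ∈ univ.erase a, w j ^ 2 = 0 := by omega
  refine ⟨a, by omega, fun j hj => ?_⟩
  have := (sum_eq_zero_iff_of_nonneg fun j _ => sq_nonneg (w j)).mp hrest0 j
    (mem_erase.mpr ⟨hj, mem_univ j⟩)
  exact pow_eq_zero_iff two_ne_zero |>.mp this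

lemma card_odd_extend_two_mul_lt [Fintype ι] {κ : Type*} [Nonempty κ] {f : κ → ι}
    (hf : Function.Injective f) (y : κ → ℤ) {w : ι → ℤ} (hw : ∀ p, Odd (w (f p))) :
    #{i | Odd (Function.extend f (fun p => 2 * y p) w i)} < #{i | Odd (w i)} := by
  refine card_lt_card ((ssubset_iff_of_subset fun i hi => ?_).mpr
    ⟨f (Classical.arbitrary κ), by simpa using hw _, by simp [hf.extend_apply]⟩)
  simp only [mem_filter, mem_univ, true_and] at hi ⊢
  by_cases hi' : ∃ p, f p = i
  · obtain ⟨p, rfl⟩ := hi'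
    rw [hf.extend_apply] at hi
    exact absurd hi (by simp)
  · rwa [Function.extend_apply' _ _ _ hi'] at hi

lemma Finset.exists_injective_fin_mem (s : Finset ι) {k : ℕ} (h : k ≤ #s) :
    ∃ f : Fin k → ι, Function.Injective f ∧ ∀ p, f p ∈ s := by
  obtain ⟨t, hts, rfl⟩ := exists_subset_card_eq h
  exact ⟨fun p => t.equivFin.symm p, Subtype.val_injective.comp t.equivFin.symm.injective,
    fun p => hts (t.equivFin.symm p).2⟩

def scaledVec (k : ℕ) (w : ι → ℤ) : ι → ℂ := fun i => (w i : ℂ) / 2 ^ k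

lemma scaledVec_eq_zero_iff {k : ℕ} {w : ι → ℤ} {i : ι} : scaledVec k w i = 0 ↔ w i = 0 := by
  simp [scaledVec]

lemma scaledVec_succ_two_mul (k : ℕ) (u : ι → ℤ) :
    scaledVec (k + 1) (fun i => 2 * u i) = scaledVec k u := by
  ext i
  simp only [scaledVec, Int.cast_mul, Int.cast_ofNat, pow_succ]
  field_simp

lemma star_scaledVec_dotProduct_eq_one_iff [Fintype ι] {k : ℕ} {w : ι → ℤ} :
    star (scaledVec k w) ⬝ᵥ scaledVec k w = 1 ↔ ∑ i, w i ^ 2 = 4 ^ k := by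
  have h : star (scaledVec k w) ⬝ᵥ scaledVec k w = ((∑ i, w i ^ 2 : ℤ) : ℂ) / 4 ^ k := by
    simp only [dotProduct, Pi.star_apply, scaledVec, star_div₀, star_pow, Complex.star_def,
      map_intCast, Complex.conj_ofNat, Int.cast_sum, Int.cast_pow, Finset.sum_div]
    refine sum_congr rfl fun i _ => ?_
    rw [show (4 : ℂ) ^ k = 2 ^ k * 2 ^ k by rw [← mul_pow]; norm_num]
    field_simp
  rw [h, div_eq_one_iff_eq (pow_ne_zero _ (by norm_num))]
  exact_mod_cast Iff.rfl

lemma extend_scaledVec {κ : Type*} {f : κ → ι} (k : ℕ) (g : κ → ℤ) (w : ι → ℤ) :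
    Function.extend f (scaledVec k g) (scaledVec k w) = scaledVec k (Function.extend f g w) :=
  funext fun i => (Function.apply_extend (fun x : ℤ => (x : ℂ) / 2 ^ k) f w i).symm

lemma exists_eq_scaledVec [Fintype ι] (v : ι → ℂ) (hv : ∀ i, v i ∈ dyadicSubring) :
    ∃ (k : ℕ) (w : ι → ℤ), v = scaledVec k w := by
  choose u q hq using hv
  refine ⟨univ.sup q, fun i => u i * 2 ^ (univ.sup q - q i), funext fun i => ?_⟩
  have hle : q i ≤ univ.sup q := le_sup (mem_univ i)
  rw [hq i, scaledVec, ← Nat.sub_add_cancel hle, pow_add, Nat.add_sub_cancel]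
  push_cast
  field_simp

end IntegerVectors

/-- `2 • HHmat` has entries `±1` and sends the all-ones vector to `4 e₀`, so
`HHmat (1 + 4t) = 2 e₀ + 2 (2 • HHmat) t`. -/
lemma HHmat_mulVec_scaledVec {k : ℕ} (u : Fin 4 → ℤ) (hu : ∀ p, u p % 4 = 1) :
    ∃ y : Fin 4 → ℤ, HHmat *ᵥ scaledVec k u = scaledVec k (fun p => 2 * y p) := by
  obtain ⟨t, ht⟩ : ∃ t : Fin 4 → ℤ, ∀ p, u p = 4 * t p + 1 :=
    ⟨fun p => u p / 4, fun p => by have := hu p; dsimp only; omega⟩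
  refine ⟨![1 + t 0 + t 1 + t 2 + t 3, t 0 - t 1 + t 2 - t 3, t 0 + t 1 - t 2 - t 3,
    t 0 - t 1 - t 2 + t 3], ?_⟩
  ext p
  fin_cases p <;>
  · simp [HHmat, mulVec, dotProduct, Fin.sum_univ_four, scaledVec, ht]
    ring

section ColumnReduction

open Finset

variable {n : ℕ}

variable (n) in
def fixesInitial (m : ℕ) : Submonoid (Matrix (Fin n) (Fin n) ℂ) where
  carrier := {P | ∀ i j : Fin n, ((i : ℕ) < m ∨ (j : ℕ) < m) → P i j = (1 : Matrix _ _ ℂ) i j}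
  mul_mem' := by
    intro P Q hP hQ i j hij
    rcases hij with hi | hj
    · calc (P * Q) i j = ((1 : Matrix (Fin n) (Fin n) ℂ) * Q) i j := by
            simp only [mul_apply, hP i _ (Or.inl hi)]
        _ = _ := by rw [one_mul, hQ i j (Or.inl hi)]
    · calc (P * Q) i j = (P * (1 : Matrix (Fin n) (Fin n) ℂ)) i j := by
            simp only [mul_apply, hQ _ j (Or.inr hj)]
        _ = _ := by rw [mul_one, hP i j (Or.inr hj)]
  one_mem' _ _ _ := rfl

lemma mulVec_apply_of_mem_fixesInitial {m : ℕ} {P : Matrix (Fin n) (Fin n) ℂ}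
    (hP : P ∈ fixesInitial n m) {i : Fin n} (hi : (i : ℕ) < m) (v : Fin n → ℂ) :
    (P *ᵥ v) i = v i := by
  simp only [mulVec, dotProduct, hP i _ (Or.inl hi), one_apply, ite_mul, one_mul, zero_mul,
    sum_ite_eq, mem_univ, if_true]

lemma levelOp_mem_fixesInitial {m k : ℕ} {f : Fin k → Fin n} (hf : ∀ p, m ≤ (f p : ℕ))
    (W : Matrix (Fin k) (Fin k) ℂ) : levelOp f W ∈ fixesInitial n m := by
  have hlt : ∀ i : Fin n, (i : ℕ) < m → i ∉ Set.range f := by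
    rintro i hi ⟨p, rfl⟩
    exact absurd (hf p) (not_le.mpr hi)
  rintro i j (hi | hj)
  · exact levelOp_apply_of_notMem_left W (hlt i hi) j
  · exact levelOp_apply_of_notMem_right W i (hlt j hj)

lemma levelOp_mem_intGenMonoid_inf_fixesInitial {m k : ℕ} {f : Fin k → Fin n}
    {W : Matrix (Fin k) (Fin k) ℂ} (hG : IsIntGen (levelOp f W)) (hf : ∀ p, m ≤ (f p : ℕ)) :
    levelOp f W ∈ intGenMonoid n ⊓ fixesInitial n m :=
  ⟨Submonoid.subset_closure hG, levelOp_mem_fixesInitial hf W⟩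

lemma levelOp_neg_one_mulVec (a : Fin n) (v : Fin n → ℂ) :
    levelOp ![a] !![-1] *ᵥ v = Function.update v a (-v a) := by
  have hf : Function.Injective ![a] := fun p q _ => Subsingleton.elim p q
  ext i
  rw [levelOp_mulVec hf]
  by_cases hi : i = a
  · subst hi
    exact (hf.extend_apply _ _ 0).trans (by simp [mulVec, dotProduct])
  · rw [Function.extend_apply' _ _ _ (by simpa [eq_comm] using hi), Function.update_of_ne hi]

lemma levelOp_Xmat_mulVec_single {a b : Fin n} (hab : a ≠ b) :
    levelOp ![a, b] Xmat *ᵥ Pi.single a 1 = Pi.single b 1 := by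
  have hf : Function.Injective ![a, b] := by
    intro p q
    fin_cases p <;> fin_cases q <;> simp [hab, hab.symm]
  ext i
  rw [levelOp_mulVec hf]
  by_cases hia : i = a
  · subst hia
    exact (hf.extend_apply _ _ 0).trans (by simp [mulVec, dotProduct, Xmat, hab.symm])
  by_cases hib : i = b
  · subst hib
    exact (hf.extend_apply _ _ 1).trans (by simp [mulVec, dotProduct, Xmat, hab.symm])
  · rw [Function.extend_apply' _ _ _ (by simp [Fin.exists_fin_two, Ne.symm hia, Ne.symm hib])]
    simp [hia, hib]

lemma isIntGen_levelOp_HHmat {f : Fin 4 → Fin n} (hf : Function.Injective f) :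
    IsIntGen (levelOp f HHmat) := by
  refine Or.inr (Or.inr ⟨f 0, f 1, f 2, f 3, hf.ne (by decide), hf.ne (by decide),
    hf.ne (by decide), hf.ne (by decide), hf.ne (by decide), hf.ne (by decide), ?_⟩)
  congr
  ext p
  fin_cases p <;> rfl

lemma exists_mulVec_eq_of_mulVec_eq {S : Submonoid (Matrix (Fin n) (Fin n) ℂ)}
    {Q : Matrix (Fin n) (Fin n) ℂ} (hQ : Q ∈ S) {v u e : Fin n → ℂ} (hQv : Q *ᵥ v = u)
    (h : ∃ P ∈ S, P *ᵥ u = e) : ∃ P ∈ S, P *ᵥ v = e :=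
  let ⟨P, hP, hPu⟩ := h
  ⟨P * Q, S.mul_mem hP hQ, by rw [← mulVec_mulVec, hQv, hPu]⟩

lemma exists_mulVec_eq_neg_on {m : ℕ} (T : Finset (Fin n)) (hT : ∀ i ∈ T, m ≤ (i : ℕ))
    (v : Fin n → ℂ) : ∃ Q ∈ intGenMonoid n ⊓ fixesInitial n m,
      Q *ᵥ v = fun i => if i ∈ T then -v i else v i := by
  induction T using Finset.induction_on with
  | empty => exact ⟨1, one_mem _, by simp⟩
  | insert a T ha ih =>
    obtain ⟨Q, hQ, hQv⟩ := ih fun i hi => hT i (mem_insert_of_mem hi)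
    have hG := levelOp_mem_intGenMonoid_inf_fixesInitial (Or.inl ⟨a, rfl⟩)
      (fun p => by fin_cases p; exact hT a (mem_insert_self a T))
    refine ⟨_, mul_mem hG hQ, ?_⟩
    rw [← mulVec_mulVec, hQv, levelOp_neg_one_mulVec]
    ext i
    by_cases hi : i = a
    · subst hi
      simp [ha]
    · simp [hi]

def IsUnitColumn (m k : ℕ) (w : Fin n → ℤ) : Prop :=
  ∑ i, w i ^ 2 = 4 ^ k ∧ ∀ i : Fin n, (i : ℕ) < m → w i = 0

namespace IsUnitColumn

variable {m k : ℕ} {w : Fin n → ℤ}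

lemma le_of_ne_zero (hw : IsUnitColumn m k w) {i : Fin n} (hi : w i ≠ 0) : m ≤ (i : ℕ) :=
  not_lt.mp fun h => hi (hw.2 i h)

lemma of_mulVec (hw : IsUnitColumn m k w) {Q : Matrix (Fin n) (Fin n) ℂ}
    (hQ : Q ∈ intGenMonoid n ⊓ fixesInitial n m) {k' : ℕ} {w' : Fin n → ℤ}
    (h : Q *ᵥ scaledVec k w = scaledVec k' w') : IsUnitColumn m k' w' := by
  refine ⟨star_scaledVec_dotProduct_eq_one_iff.mp ?_, fun i hi => ?_⟩
  · rw [← h, star_mulVec_dotProduct_mulVec (intGenMonoid_le_unitaryGroup hQ.1)]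
    exact star_scaledVec_dotProduct_eq_one_iff.mpr hw.1
  · rw [← scaledVec_eq_zero_iff, ← h, mulVec_apply_of_mem_fixesInitial hQ.2 hi,
      scaledVec_eq_zero_iff]
    exact hw.2 i hi

lemma exists_mulVec_normalize_signs (hw : IsUnitColumn m k w) :
    ∃ Q ∈ intGenMonoid n ⊓ fixesInitial n m, ∃ w' : Fin n → ℤ,
      Q *ᵥ scaledVec k w = scaledVec k w' ∧ IsUnitColumn m k w' ∧ ∀ i, w' i % 4 ≠ 3 := by
  obtain ⟨Q, hQ, hQv⟩ := exists_mulVec_eq_neg_on {i | w i % 4 = 3}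
    (fun i hi => hw.le_of_ne_zero (by simp only [mem_filter] at hi; omega)) (scaledVec k w)
  have hQw : Q *ᵥ scaledVec k w =
      scaledVec k (fun i => if w i % 4 = 3 then -w i else w i) := by
    rw [hQv]
    ext i
    simp only [scaledVec, mem_filter, mem_univ, true_and]
    split_ifs <;> push_cast <;> ring
  exact ⟨Q, hQ, _, hQw, hw.of_mulVec hQ hQw, fun i => by split_ifs <;> omega⟩

lemma exists_mulVec_eq_single_of_zero {m : Fin n} (hw : IsUnitColumn m 0 w)
    (hw4 : ∀ i, w i % 4 ≠ 3) :
    ∃ P ∈ intGenMonoid n ⊓ fixesInitial n m, P *ᵥ scaledVec 0 w = Pi.single m 1 := by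
  obtain ⟨a, ha, h0⟩ := exists_sq_eq_one_of_sum_sq_eq_one w (by simpa using hw.1)
  have ha1 : w a = 1 := by
    have := hw4 a
    rcases sq_eq_one_iff.mp ha with h | h <;> omega
  have hv : scaledVec 0 w = Pi.single a 1 := by
    ext i
    by_cases hi : i = a
    · subst hi
      simp [scaledVec, ha1]
    · simp [scaledVec, h0 i hi, hi]
  rw [hv]
  by_cases ham : a = m
  · exact ⟨1, one_mem _, by rw [one_mulVec, ham]⟩
  · have hma := hw.le_of_ne_zero (i := a) (by omega)
    exact ⟨_, levelOp_mem_intGenMonoid_inf_fixesInitial (Or.inr (Or.inl ⟨a, m, ham, rfl⟩))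
      (fun p => by fin_cases p <;> simp [hma]), levelOp_Xmat_mulVec_single ham⟩

lemma exists_mulVec_HHmat_step (hw : IsUnitColumn m (k + 1) w) (hw4 : ∀ i, w i % 4 ≠ 3)
    (hodd : ∃ i, Odd (w i)) :
    ∃ G ∈ intGenMonoid n ⊓ fixesInitial n m, ∃ w' : Fin n → ℤ,
      G *ᵥ scaledVec (k + 1) w = scaledVec (k + 1) w' ∧ (∀ i, w' i % 4 ≠ 3) ∧
      #{i | Odd (w' i)} < #{i | Odd (w i)} := by
  have h4 : 4 ≤ #{i | Odd (w i)} := by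
    have hdvd := four_dvd_card_odd_of_four_dvd_sum_sq w
      (by rw [hw.1, pow_succ]; exact dvd_mul_left 4 _)
    obtain ⟨i, hi⟩ := hodd
    have hpos : 0 < #{i | Odd (w i)} := card_pos.mpr ⟨i, by simpa using hi⟩
    omega
  obtain ⟨f, hf, hfs⟩ := Finset.exists_injective_fin_mem _ h4
  simp only [mem_filter, mem_univ, true_and] at hfs
  have hf1 : ∀ p, w (f p) % 4 = 1 := fun p => by
    have := hw4 (f p)
    have := Int.odd_iff.mp (hfs p)
    omega
  obtain ⟨y, hy⟩ := HHmat_mulVec_scaledVec (k := k + 1) (w ∘ f) hf1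
  refine ⟨levelOp f HHmat, levelOp_mem_intGenMonoid_inf_fixesInitial (isIntGen_levelOp_HHmat hf)
    (fun p => hw.le_of_ne_zero (by have := hf1 p; omega)), _, ?_, fun i => ?_,
    card_odd_extend_two_mul_lt hf y hfs⟩
  · rw [levelOp_mulVec hf, ← extend_scaledVec, ← hy]
    rfl
  · by_cases hi : ∃ p, f p = i
    · obtain ⟨p, rfl⟩ := hi
      rw [hf.extend_apply]
      omega
    · rw [Function.extend_apply' _ _ _ hi]
      exact hw4 i

lemma exists_mulVec_eq_scaledVec_of_succ (hw : IsUnitColumn m (k + 1) w)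
    (hw4 : ∀ i, w i % 4 ≠ 3) :
    ∃ Q ∈ intGenMonoid n ⊓ fixesInitial n m, ∃ u : Fin n → ℤ,
      Q *ᵥ scaledVec (k + 1) w = scaledVec k u := by
  induction hN : #{i | Odd (w i)} using Nat.strong_induction_on generalizing w with
  | _ N ih =>
  by_cases hodd : ∃ i, Odd (w i)
  · obtain ⟨G, hG, w', hGw, hw4', hlt⟩ := hw.exists_mulVec_HHmat_step hw4 hodd
    obtain ⟨Q, hQ, u, hQu⟩ := ih _ (hN ▸ hlt) (hw.of_mulVec hG hGw) hw4' rfl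
    exact ⟨Q * G, mul_mem hQ hG, u, by rw [← mulVec_mulVec, hGw, hQu]⟩
  · simp only [not_exists, Int.not_odd_iff_even] at hodd
    choose u hu using hodd
    refine ⟨1, one_mem _, u, ?_⟩
    rw [one_mulVec, show w = fun i => 2 * u i from funext fun i => by rw [hu i]; ring,
      scaledVec_succ_two_mul]

theorem exists_mulVec_eq_single {m : Fin n} :
    ∀ {k : ℕ} {w : Fin n → ℤ}, IsUnitColumn m k w →
      ∃ P ∈ intGenMonoid n ⊓ fixesInitial n m, P *ᵥ scaledVec k w = Pi.single m 1 := by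
  intro k
  induction k with
  | zero =>
    intro w hw
    obtain ⟨Q, hQ, w', hQw, hw', hw4⟩ := hw.exists_mulVec_normalize_signs
    exact exists_mulVec_eq_of_mulVec_eq hQ hQw (hw'.exists_mulVec_eq_single_of_zero hw4)
  | succ k ih =>
    intro w hw
    obtain ⟨Q, hQ, w', hQw, hw', hw4⟩ := hw.exists_mulVec_normalize_signs
    obtain ⟨Q', hQ', u, hQ'u⟩ := hw'.exists_mulVec_eq_scaledVec_of_succ hw4
    exact exists_mulVec_eq_of_mulVec_eq hQ hQw
      (exists_mulVec_eq_of_mulVec_eq hQ' hQ'u (ih (hw'.of_mulVec hQ' hQ'u)))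

end IsUnitColumn

end ColumnReduction

section MatrixReduction

variable {n : ℕ}

lemma apply_eq_zero_of_forall_lt_apply_eq_one {V : Matrix (Fin n) (Fin n) ℂ}
    (hV : V ∈ unitaryGroup (Fin n) ℂ) {m : ℕ}
    (hcols : ∀ i j : Fin n, (j : ℕ) < m → V i j = (1 : Matrix (Fin n) (Fin n) ℂ) i j)
    {i j : Fin n} (hi : (i : ℕ) < m) (hij : i ≠ j) : V i j = 0 := by
  have h := congr_fun₂ (mem_unitaryGroup_iff'.mp hV) i j
  simp only [mul_apply, star_apply, hcols _ i hi, one_apply_ne hij] at h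
  simpa [one_apply] using h

lemma isUnitColumn_of_mem_unitaryGroup {V : Matrix (Fin n) (Fin n) ℂ}
    (hV : V ∈ unitaryGroup (Fin n) ℂ) {c : Fin n}
    (hcols : ∀ i j : Fin n, j < c → V i j = (1 : Matrix (Fin n) (Fin n) ℂ) i j) {k : ℕ}
    {w : Fin n → ℤ} (hw : (fun i => V i c) = scaledVec k w) : IsUnitColumn c k w := by
  refine ⟨star_scaledVec_dotProduct_eq_one_iff.mp ?_, fun i hi => ?_⟩
  · rw [← hw]
    simpa [mul_apply, dotProduct] using congr_fun₂ (mem_unitaryGroup_iff'.mp hV) c c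
  · rw [← scaledVec_eq_zero_iff (k := k), ← hw]
    exact apply_eq_zero_of_forall_lt_apply_eq_one hV hcols hi (Fin.ne_of_lt hi)

theorem exists_mem_intGenMonoid_mul_eq_one (m : ℕ) (hm : m ≤ n) (V : Matrix (Fin n) (Fin n) ℂ)
    (hV : V ∈ unitaryGroup (Fin n) ℂ) (hD : V ∈ dyadicSubring.matrix)
    (hcols : ∀ i j : Fin n, (j : ℕ) < m → V i j = (1 : Matrix (Fin n) (Fin n) ℂ) i j) :
    ∃ P ∈ intGenMonoid n, P * V = 1 := by
  induction hr : n - m generalizing m V with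
  | zero =>
    refine ⟨1, one_mem _, ?_⟩
    ext i j
    rw [one_mul]
    exact hcols i j (by omega)
  | succ r ih =>
    set c : Fin n := ⟨m, by omega⟩
    obtain ⟨k, w, hw⟩ := exists_eq_scaledVec (fun i => V i c) (fun i => hD i c)
    obtain ⟨P, hP, hPv⟩ := (isUnitColumn_of_mem_unitaryGroup hV hcols hw).exists_mulVec_eq_single
    have hPcols : ∀ i j : Fin n, (j : ℕ) < m + 1 →
        (P * V) i j = (1 : Matrix (Fin n) (Fin n) ℂ) i j := by
      intro i j hj
      rcases Nat.lt_succ_iff_lt_or_eq.mp hj with hj | hj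
      · calc (P * V) i j = (P * (1 : Matrix (Fin n) (Fin n) ℂ)) i j := by
              simp only [mul_apply, hcols _ j hj]
          _ = _ := by rw [mul_one]; exact hP.2 i j (Or.inr hj)
      · obtain rfl : j = c := Fin.ext hj
        calc (P * V) i c = (P *ᵥ fun l => V l c) i := rfl
          _ = _ := by rw [hw, hPv, Pi.single_apply, one_apply]
    obtain ⟨Q, hQ, hQPV⟩ := ih (m + 1) (by omega) (P * V)
      (mul_mem (intGenMonoid_le_unitaryGroup hP.1) hV)
      (mul_mem (intGenMonoid_le_matrix_dyadicSubring hP.1) hD) hPcols (by omega)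
    exact ⟨Q * P, mul_mem hQ hP.1, by rw [mul_assoc, hQPV]⟩

end MatrixReduction

theorem stmt0_general (n : ℕ) (V : Matrix (Fin n) (Fin n) ℂ)
    (hV : V ∈ Matrix.unitaryGroup (Fin n) ℂ)
    (hD : ∀ j k, IsDyadic (V j k)) :
    ∃ L : List (Matrix (Fin n) (Fin n) ℂ),
      (∀ G ∈ L, IsIntGen G) ∧ L.prod * V = 1 := by
  obtain ⟨P, hP, hPV⟩ := exists_mem_intGenMonoid_mul_eq_one 0 n.zero_le V hV hD
    fun _ _ h => absurd h (Nat.not_lt_zero _)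
  obtain ⟨L, hL, rfl⟩ := Submonoid.exists_list_of_mem_closure hP
  exact ⟨L, hL, hPV⟩

/-- Every unitary matrix with entries in `ℤ[1/2]` is a product of the
generators `(-1)_[a]`, `X_[a,b]`, `(H⊗H)_[a,b,c,d]`. -/
theorem stmt0 (n : ℕ) (hn : 1 ≤ n) (V : Matrix (Fin n) (Fin n) ℂ)
    (hV : V ∈ Matrix.unitaryGroup (Fin n) ℂ)
    (hD : ∀ j k, IsDyadic (V j k)) :
    ∃ L : List (Matrix (Fin n) (Fin n) ℂ),
      (∀ G ∈ L, IsIntGen G) ∧ L.prod * V = 1 :=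
  stmt0_general n V hV hD
end
end

section
/- Let n ≥ 1 and let V = W/√2^q be an n × n unitary matrix, where W is a matrix with entries in the Gaussian integers ℤ[i] and q ∈ ℕ. Then there exist finitely many generators G₁, …, G_ℓ, each taken from the set {i_[a], X_[a,b], (ωH)_[a,b] : a, b distinct elements of {1,…,n}} ∪ {ω·I_n}, such that G₁ ⋯ G_ℓ V = I. -/
open Matrix Complex

noncomputable section

/-- The gate `ωH = ((1+i)/2)[[1,1],[1,-1]]`, where `ω = e^{iπ/4}`. -/
def omegaHmat : Matrix (Fin 2) (Fin 2) ℂ :=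
  ((1 + Complex.I) / 2) • !![1, 1; 1, -1]

/-- `G` is one of the generators `i_[a]`, `X_[a,b]`, `(ωH)_[a,b]` with `a ≠ b`. -/
def IsGaussGen {n : ℕ} (G : Matrix (Fin n) (Fin n) ℂ) : Prop :=
  (∃ a : Fin n, G = levelOp ![a] !![Complex.I]) ∨
  (∃ a b : Fin n, a ≠ b ∧ G = levelOp ![a, b] Xmat) ∨
  (∃ a b : Fin n, a ≠ b ∧ G = levelOp ![a, b] omegaHmat)

/-- `G` is one of the generators `i_[a]`, `X_[a,b]`, `(ωH)_[a,b]`, or the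
scalar matrix `ω·I_n` where `ω = e^{iπ/4} = (1+i)/√2`. -/
def IsGaussGenOmega {n : ℕ} (G : Matrix (Fin n) (Fin n) ℂ) : Prop :=
  IsGaussGen G ∨ G = ((1 + Complex.I) / (Real.sqrt 2 : ℂ)) • (1 : Matrix (Fin n) (Fin n) ℂ)


/-!
Column by column. Write column `c` of the current matrix as `u / √2^q` with `u ∈ ℤ[i]^n`;
unitarity gives `∑ |u_j|² = 2^q`, and orthogonality to the columns already reduced to
`ω^t e_k` (`k < c`) forces `u_j = 0` for `j < c`. If every `u_j` is divisible by
`1 + i = √2 ω`, a factor `ω` comes out and `q` drops. Otherwise, since `|z|² ≡ re z + im z`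
mod 2, an even number (so at least two) of the `u_j` are not divisible by `1 + i`; after
multiplying one of them by `i` they agree mod 2, and `(ωH)_[j,k]` turns both into multiples of
`1 + i` with the same `q`. When `q = 0` the column is a unit `i^s` times a basis vector, which
`X` moves into place. In the end the matrix is `diag(ω^{t_k})`, `t_k ≤ 1`; its entries lie in
`ℤ[i]/√2^Q` where every generator adds 2 to `Q`, so irrationality of `√2` gives
`t_k = Q mod 2` for all `k`, and `ω^8 = 1` removes the scalar with copies of `ω·I`.
-/

local notation "ℤ[i]" => GaussianInt

namespace GaussianSynthesis

variable {n : ℕ}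

lemma sum_eq_sum_of_eq_off_pair {ι M : Type*} [Fintype ι] [DecidableEq ι] [AddCommMonoid M]
    {f g : ι → M} {j k : ι} (hjk : j ≠ k) (hpair : f j + f k = g j + g k)
    (hoff : ∀ x, x ≠ j → x ≠ k → f x = g x) : ∑ x, f x = ∑ x, g x := by
  have hk : k ∈ Finset.univ.erase j := Finset.mem_erase.mpr ⟨hjk.symm, Finset.mem_univ k⟩
  rw [← Finset.add_sum_erase _ f (Finset.mem_univ j), ← Finset.add_sum_erase _ f hk,
    ← Finset.add_sum_erase _ g (Finset.mem_univ j), ← Finset.add_sum_erase _ g hk,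
    ← add_assoc, ← add_assoc, hpair]
  congr 1
  refine Finset.sum_congr rfl fun x hx => ?_
  obtain ⟨hxk, hx⟩ := Finset.mem_erase.mp hx
  exact hoff x (Finset.mem_erase.mp hx).1 hxk

lemma col_mul {l m o R : Type*} [Fintype m] [NonUnitalNonAssocSemiring R]
    (A : Matrix l m R) (B : Matrix m o R) (k : o) : (A * B).col k = A *ᵥ B.col k :=
  rfl

lemma apply_eq_zero_of_col_eq_single {ι 𝕜 : Type*} [Fintype ι] [DecidableEq ι] [RCLike 𝕜]
    {M : Matrix ι ι 𝕜} (hM : M ∈ unitaryGroup ι 𝕜) {r c : ι} (hrc : r ≠ c) {z : 𝕜}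
    (hz : z ≠ 0) (hr : M.col r = Pi.single r z) : M r c = 0 := by
  have hcol : ∀ j, M j r = (Pi.single r z : ι → 𝕜) j := congrFun hr
  have h := congrFun (congrFun (mem_unitaryGroup_iff'.mp hM) r) c
  rw [mul_apply, one_apply_ne hrc, Finset.sum_eq_single r] at h
  · simpa [hcol, hz] using h
  · intro j _ hj
    simp [hcol, hj]
  · simp

def ω : ℂ := (1 + I) / (√2 : ℝ)

lemma sqrt_two_mul_self : ((√2 : ℝ) : ℂ) * (√2 : ℝ) = 2 := by
  rw [← ofReal_mul, Real.mul_self_sqrt zero_le_two, ofReal_ofNat]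

lemma sqrt_two_ne_zero : ((√2 : ℝ) : ℂ) ≠ 0 := by
  exact_mod_cast (Real.sqrt_pos.mpr two_pos).ne'

lemma sqrt_two_sq : ((√2 : ℝ) : ℂ) ^ 2 = 2 := by rw [sq, sqrt_two_mul_self]

lemma ω_sq : ω ^ 2 = I := by
  rw [ω, div_pow, sq, sq, sqrt_two_mul_self]
  linear_combination I_sq / 2

lemma ω_pow_eight : ω ^ 8 = 1 := by
  rw [show 8 = 2 * 4 from rfl, pow_mul, ω_sq, I_pow_four]

lemma ω_ne_zero : ω ≠ 0 := fun h => by simpa [h] using ω_pow_eight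

lemma I_pow_mul_ω_pow (t : ℕ) : I ^ (3 * (t / 2)) * ω ^ t = ω ^ (t % 2) := by
  rw [← ω_sq, ← pow_mul, ← pow_add,
    show 2 * (3 * (t / 2)) + t = 8 * (t / 2) + t % 2 by omega, pow_add, pow_mul, ω_pow_eight,
    one_pow, one_mul]

lemma ω_mul_one_sub_I : ω * (1 - I) = (√2 : ℝ) := by
  rw [ω, div_mul_eq_mul_div, div_eq_iff sqrt_two_ne_zero]
  linear_combination (-1 : ℂ) * sqrt_two_mul_self - I_sq

lemma levelOp_single_apply (a : Fin n) (W : Matrix (Fin 1) (Fin 1) ℂ) (j k : Fin n) :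
    levelOp ![a] W j k =
      if a = j then (if a = k then W 0 0 else 0) else (if j = k then 1 else 0) := by
  simp only [levelOp, Fin.sum_univ_one, Fin.forall_fin_one, Matrix.cons_val_zero, ne_eq]
  by_cases h1 : a = j <;> by_cases h2 : a = k <;> by_cases h3 : j = k <;> simp_all

lemma levelOp_pair_apply {a b : Fin n} (hab : a ≠ b) (W : Matrix (Fin 2) (Fin 2) ℂ)
    (j k : Fin n) :
    levelOp ![a, b] W j k =
      if a = j then (if a = k then W 0 0 else if b = k then W 0 1 else 0)
      else if b = j then (if a = k then W 1 0 else if b = k then W 1 1 else 0)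
      else (if j = k then 1 else 0) := by
  simp only [levelOp, Fin.sum_univ_two, Fin.forall_fin_two, Matrix.cons_val_zero,
    Matrix.cons_val_one, ne_eq]
  by_cases h1 : a = j <;> by_cases h2 : b = j <;> by_cases h3 : a = k <;>
    by_cases h4 : b = k <;> by_cases h5 : j = k <;> simp_all

lemma levelOp_single_mulVec (a : Fin n) (W : Matrix (Fin 1) (Fin 1) ℂ) (v : Fin n → ℂ) :
    levelOp ![a] W *ᵥ v = Function.update v a (W 0 0 * v a) := by
  ext j
  simp only [mulVec, dotProduct, levelOp_single_apply, Function.update_apply, ite_mul,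
    one_mul, zero_mul]
  by_cases h : a = j
  · simp [h]
  · simp [h, Ne.symm h]

lemma levelOp_pair_mulVec {a b : Fin n} (hab : a ≠ b) (W : Matrix (Fin 2) (Fin 2) ℂ)
    (v : Fin n → ℂ) :
    levelOp ![a, b] W *ᵥ v = Function.update (Function.update v a (W 0 0 * v a + W 0 1 * v b))
      b (W 1 0 * v a + W 1 1 * v b) := by
  ext j
  simp only [mulVec, dotProduct, levelOp_pair_apply hab, Function.update_apply, ite_mul,
    one_mul, zero_mul]
  have hrow : ∀ x y : ℂ, ∑ l, (if a = l then x * v l else if b = l then y * v l else 0) =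
      x * v a + y * v b := fun x y => by
    have hsplit : ∀ l, (if a = l then x * v l else if b = l then y * v l else 0) =
        (if a = l then x * v l else 0) + (if b = l then y * v l else 0) := fun l => by
      split_ifs <;> simp_all
    simp only [hsplit, Finset.sum_add_distrib, Finset.sum_ite_eq, Finset.mem_univ, if_true]
  rcases eq_or_ne a j with rfl | h1
  · simp [hab, hrow]
  rcases eq_or_ne b j with rfl | h2
  · simp [h1, hrow]
  · simp [h1, h2, Ne.symm h1, Ne.symm h2]

lemma star_levelOp_single (a : Fin n) (W : Matrix (Fin 1) (Fin 1) ℂ) :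
    star (levelOp ![a] W) = levelOp ![a] (star W) := by
  ext j k
  simp only [star_apply, levelOp_single_apply]
  split_ifs <;> subst_vars <;> simp_all

lemma star_levelOp_pair {a b : Fin n} (hab : a ≠ b) (W : Matrix (Fin 2) (Fin 2) ℂ) :
    star (levelOp ![a, b] W) = levelOp ![a, b] (star W) := by
  ext j k
  simp only [star_apply, levelOp_pair_apply hab]
  split_ifs <;> subst_vars <;> simp_all

lemma levelOp_single_mul (a : Fin n) (W W' : Matrix (Fin 1) (Fin 1) ℂ) :
    levelOp ![a] W * levelOp ![a] W' = levelOp ![a] (W * W') := by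
  refine ext_iff_mulVec.mpr fun v => ?_
  rw [← mulVec_mulVec]
  simp only [levelOp_single_mulVec, Function.update_self, Function.update_idem, mul_apply,
    Fin.sum_univ_one, mul_assoc]

lemma levelOp_pair_mul {a b : Fin n} (hab : a ≠ b) (W W' : Matrix (Fin 2) (Fin 2) ℂ) :
    levelOp ![a, b] W * levelOp ![a, b] W' = levelOp ![a, b] (W * W') := by
  refine ext_iff_mulVec.mpr fun v => ?_
  rw [← mulVec_mulVec]
  ext j
  simp only [levelOp_pair_mulVec hab, Function.update_apply, mul_apply, Fin.sum_univ_two,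
    if_neg hab, if_neg (Ne.symm hab), if_true]
  split_ifs <;> ring

lemma levelOp_single_one (a : Fin n) : levelOp ![a] 1 = 1 := by
  refine ext_iff_mulVec.mpr fun v => ?_
  simp [levelOp_single_mulVec]

lemma levelOp_pair_one {a b : Fin n} (hab : a ≠ b) : levelOp ![a, b] 1 = 1 := by
  refine ext_iff_mulVec.mpr fun v => ?_
  simp [levelOp_pair_mulVec hab]

lemma levelOp_single_mem_unitaryGroup (a : Fin n) {W : Matrix (Fin 1) (Fin 1) ℂ}
    (hW : W ∈ unitaryGroup (Fin 1) ℂ) : levelOp ![a] W ∈ unitaryGroup (Fin n) ℂ := by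
  rw [mem_unitaryGroup_iff, star_levelOp_single, levelOp_single_mul,
    mem_unitaryGroup_iff.mp hW, levelOp_single_one]

lemma levelOp_pair_mem_unitaryGroup {a b : Fin n} (hab : a ≠ b) {W : Matrix (Fin 2) (Fin 2) ℂ}
    (hW : W ∈ unitaryGroup (Fin 2) ℂ) : levelOp ![a, b] W ∈ unitaryGroup (Fin n) ℂ := by
  rw [mem_unitaryGroup_iff, star_levelOp_pair hab, levelOp_pair_mul hab,
    mem_unitaryGroup_iff.mp hW, levelOp_pair_one hab]

lemma matrix_I_mem_unitaryGroup : !![I] ∈ unitaryGroup (Fin 1) ℂ := by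
  rw [mem_unitaryGroup_iff]
  ext i j
  fin_cases i; fin_cases j
  simp [mul_apply]

lemma Xmat_mem_unitaryGroup : Xmat ∈ unitaryGroup (Fin 2) ℂ := by
  rw [mem_unitaryGroup_iff]
  ext i j
  fin_cases i <;> fin_cases j <;> simp [Xmat, mul_apply, Fin.sum_univ_two]

lemma omegaHmat_mem_unitaryGroup : omegaHmat ∈ unitaryGroup (Fin 2) ℂ := by
  have hc : star ((1 + I) / 2) * ((1 + I) / 2) = (2 : ℂ)⁻¹ := by
    rw [star_def, map_div₀, map_add, map_one, conj_I, map_ofNat]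
    linear_combination (-1 / 4 : ℂ) * I_sq
  have hH : star !![(1 : ℂ), 1; 1, -1] * !![(1 : ℂ), 1; 1, -1] = (2 : ℂ) • 1 := by
    ext i j
    fin_cases i <;> fin_cases j <;> norm_num [mul_apply, Fin.sum_univ_two]
  rw [mem_unitaryGroup_iff', omegaHmat, star_smul, smul_mul_smul_comm, hc, hH, smul_smul,
    inv_mul_cancel₀ two_ne_zero, one_smul]

lemma _root_.IsGaussGen.mem_unitaryGroup {G : Matrix (Fin n) (Fin n) ℂ} (hG : IsGaussGen G) :
    G ∈ unitaryGroup (Fin n) ℂ := by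
  rcases hG with ⟨a, rfl⟩ | ⟨a, b, hab, rfl⟩ | ⟨a, b, hab, rfl⟩
  · exact levelOp_single_mem_unitaryGroup a matrix_I_mem_unitaryGroup
  · exact levelOp_pair_mem_unitaryGroup hab Xmat_mem_unitaryGroup
  · exact levelOp_pair_mem_unitaryGroup hab omegaHmat_mem_unitaryGroup

lemma _root_.IsGaussGen.list_prod_mem_unitaryGroup {L : List (Matrix (Fin n) (Fin n) ℂ)}
    (hL : ∀ G ∈ L, IsGaussGen G) : L.prod ∈ unitaryGroup (Fin n) ℂ :=
  Submonoid.list_prod_mem _ fun G hG => (hL G hG).mem_unitaryGroup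

section GaussianIntegers

open GaussianInt Zsqrtd

lemma toComplex_I : ((⟨0, 1⟩ : ℤ[i]) : ℂ) = I := by simp [toComplex_def']

lemma toComplex_one_add_I : ((⟨1, 1⟩ : ℤ[i]) : ℂ) = 1 + I := by simp [toComplex_def']

lemma norm_one_add_I_mul (w : ℤ[i]) : (⟨1, 1⟩ * w : ℤ[i]).norm = 2 * w.norm := by
  rw [norm_mul]
  rfl

lemma even_re_add_im_one_add_I_mul (w : ℤ[i]) :
    Even ((⟨1, 1⟩ * w : ℤ[i]).re + (⟨1, 1⟩ * w : ℤ[i]).im) :=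
  ⟨w.re, by simp only [re_mul, im_mul]; ring⟩

lemma exists_eq_one_add_I_mul {z : ℤ[i]} (h : Even (z.re + z.im)) :
    ∃ w, z = ⟨1, 1⟩ * w := by
  obtain ⟨r, hr⟩ := h
  refine ⟨⟨r, r - z.re⟩, ?_⟩
  ext <;> simp only [re_mul, im_mul] <;> omega

lemma even_norm_iff (z : ℤ[i]) : Even z.norm ↔ Even (z.re + z.im) := by
  rw [Zsqrtd.norm_def]
  simp [Int.even_add, Int.even_mul, parity_simps]

lemma two_dvd_sub_or_two_dvd_sub_I_mul {z w : ℤ[i]} (hz : Odd (z.re + z.im))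
    (hw : Odd (w.re + w.im)) : (2 : ℤ[i]) ∣ z - w ∨ (2 : ℤ[i]) ∣ z - ⟨0, 1⟩ * w := by
  have h2 : (2 : ℤ[i]) = ((2 : ℤ) : ℤ[i]) := rfl
  rw [h2, intCast_dvd, intCast_dvd]
  simp only [Int.odd_iff] at hz hw
  simp only [re_sub, im_sub, re_mul, im_mul]
  omega

lemma norm_add_norm_of_sub_eq_two_mul {z w d : ℤ[i]} (hd : z - w = 2 * d) :
    (⟨1, 1⟩ * (w + d) : ℤ[i]).norm + (⟨1, 1⟩ * d : ℤ[i]).norm = z.norm + w.norm := by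
  rw [sub_eq_iff_eq_add'.mp hd]
  simp only [Zsqrtd.norm_def, re_mul, im_mul, re_add, im_add, Zsqrtd.re_ofNat, Zsqrtd.im_ofNat]
  ring

lemma exists_I_pow_eq_of_norm_eq_one {z : ℤ[i]} (h : z.norm = 1) :
    ∃ s : ℕ, (z : ℂ) = I ^ s := by
  have hz : z = 1 ∨ z = -1 ∨ z = ⟨0, 1⟩ ∨ z = ⟨0, -1⟩ := by
    obtain ⟨a, b⟩ := z
    rw [Zsqrtd.norm_def] at h
    dsimp only at h
    have ha1 : a ≤ 1 := by nlinarith [mul_self_nonneg b]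
    have ha2 : -1 ≤ a := by nlinarith [mul_self_nonneg b]
    have hb1 : b ≤ 1 := by nlinarith [mul_self_nonneg a]
    have hb2 : -1 ≤ b := by nlinarith [mul_self_nonneg a]
    interval_cases a <;> interval_cases b <;> simp_all [Zsqrtd.ext_iff]
  rcases hz with rfl | rfl | rfl | rfl
  exacts [⟨0, by simp⟩, ⟨2, by simp⟩, ⟨1, by rw [pow_one, toComplex_I]⟩,
    ⟨3, by simp [toComplex_def', pow_succ]⟩]

end GaussianIntegers

section Dyadic

open GaussianInt

lemma I_mem_range : I ∈ toComplex.range := ⟨⟨0, 1⟩, toComplex_I⟩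

lemma sqrt_two_pow_odd_notMem_range (m : ℕ) :
    ((√2 : ℝ) : ℂ) ^ (2 * m + 1) ∉ toComplex.range := by
  rintro ⟨z, hz⟩
  have hre : ((z.re : ℤ) : ℝ) = ((2 ^ m : ℕ) : ℝ) * √2 := by
    rw [GaussianInt.intCast_re, hz, ← ofReal_pow, ofReal_re, pow_succ, pow_mul,
      Real.sq_sqrt zero_le_two]
    push_cast; ring
  exact (irrational_sqrt_two.natCast_mul (by positivity)).ne_int _ hre.symm

lemma eq_mod_two_of_sqrt_two_pow_mul_ω_pow_mem {Q t : ℕ} (ht : t ≤ 1)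
    (h : ((√2 : ℝ) : ℂ) ^ Q * ω ^ t ∈ toComplex.range) : t = Q % 2 := by
  obtain ⟨m, rfl | rfl⟩ := Nat.even_or_odd' Q <;> interval_cases t
  · omega
  · refine absurd ?_ (sqrt_two_pow_odd_notMem_range m)
    have h1 := toComplex.range.mul_mem h (toComplex.range.sub_mem (one_mem _) I_mem_range)
    rwa [pow_one, mul_assoc, ω_mul_one_sub_I, ← pow_succ] at h1
  · exact absurd (by simpa using h) (sqrt_two_pow_odd_notMem_range m)
  · omega

def IsGaussDyadic (Q : ℕ) (M : Matrix (Fin n) (Fin n) ℂ) : Prop :=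
  ∀ j k, ((√2 : ℝ) : ℂ) ^ Q * M j k ∈ toComplex.range

lemma isGaussDyadic_one : IsGaussDyadic 0 (1 : Matrix (Fin n) (Fin n) ℂ) := fun j k => by
  rw [pow_zero, one_mul, one_apply]
  split_ifs
  exacts [one_mem _, zero_mem _]

lemma IsGaussDyadic.mul {P Q : ℕ} {G M : Matrix (Fin n) (Fin n) ℂ} (hG : IsGaussDyadic P G)
    (hM : IsGaussDyadic Q M) : IsGaussDyadic (P + Q) (G * M) := fun j k => by
  rw [mul_apply, Finset.mul_sum]
  refine sum_mem fun l _ => ?_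
  convert mul_mem (hG j l) (hM l k) using 1
  ring

lemma _root_.IsGaussGen.isGaussDyadic {G : Matrix (Fin n) (Fin n) ℂ} (hG : IsGaussGen G) :
    IsGaussDyadic 2 G := by
  have h1I : 1 + I ∈ toComplex.range := add_mem (one_mem _) I_mem_range
  rcases hG with ⟨a, rfl⟩ | ⟨a, b, hab, rfl⟩ | ⟨a, b, hab, rfl⟩ <;> intro j k
  · simp only [levelOp_single_apply, sqrt_two_sq]
    split_ifs <;> simp [-RingHom.mem_range, mul_mem, I_mem_range, ofNat_mem]
  · simp only [levelOp_pair_apply hab, sqrt_two_sq]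
    split_ifs <;> simp [-RingHom.mem_range, Xmat, ofNat_mem]
  · simp only [levelOp_pair_apply hab, sqrt_two_sq]
    split_ifs <;> simp [-RingHom.mem_range, -neg_add_rev, omegaHmat, mul_div_cancel₀, h1I,
      ofNat_mem]

lemma isGaussDyadic_list_prod {L : List (Matrix (Fin n) (Fin n) ℂ)}
    (hL : ∀ G ∈ L, IsGaussGen G) : IsGaussDyadic (2 * L.length) L.prod := by
  induction L with
  | nil => exact isGaussDyadic_one
  | cons G L ih =>
    rw [List.prod_cons, List.length_cons, mul_add_one, add_comm]
    exact (hL G List.mem_cons_self).isGaussDyadic.mul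
      (ih fun G' hG' => hL G' (List.mem_cons_of_mem _ hG'))

end Dyadic

section ColumnReduction

open GaussianInt Function

def gaussVec (q : ℕ) (u : Fin n → ℤ[i]) : Fin n → ℂ :=
  fun j => (u j : ℂ) / ((√2 : ℝ) : ℂ) ^ q

-- The entries not divisible by `1 + i`.
def oddSupport (u : Fin n → ℤ[i]) : Finset (Fin n) := {j | Odd ((u j).re + (u j).im)}

@[simp]
lemma mem_oddSupport {u : Fin n → ℤ[i]} {j : Fin n} :
    j ∈ oddSupport u ↔ Odd ((u j).re + (u j).im) := by
  simp [oddSupport]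

-- `(ωH)_[j,k]` sends `(u j, u k)` to `(1 + i)/2 • (u j + u k, u j - u k)`; with
-- `u j - u k = 2 d` these are `(1 + i)(u k + d)` and `(1 + i) d`.
def hadamardStep (u : Fin n → ℤ[i]) (j k : Fin n) (d : ℤ[i]) : Fin n → ℤ[i] :=
  update (update u j (⟨1, 1⟩ * (u k + d))) k (⟨1, 1⟩ * d)

lemma gaussVec_update (q : ℕ) (u : Fin n → ℤ[i]) (k : Fin n) (z : ℤ[i]) :
    gaussVec q (update u k z) = update (gaussVec q u) k ((z : ℂ) / ((√2 : ℝ) : ℂ) ^ q) :=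
  funext fun x => apply_update (fun _ (w : ℤ[i]) => (w : ℂ) / ((√2 : ℝ) : ℂ) ^ q) u k z x

lemma gaussVec_one_add_I_mul (q : ℕ) (u : Fin n → ℤ[i]) :
    gaussVec (q + 1) (fun j => ⟨1, 1⟩ * u j) = ω • gaussVec q u := by
  ext j
  simp only [gaussVec, Pi.smul_apply, smul_eq_mul, toComplex_mul, toComplex_one_add_I, ω, pow_succ]
  field_simp

lemma levelOp_I_mulVec_gaussVec (k : Fin n) (q : ℕ) (u : Fin n → ℤ[i]) :
    levelOp ![k] !![I] *ᵥ gaussVec q u = gaussVec q (update u k (⟨0, 1⟩ * u k)) := by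
  rw [levelOp_single_mulVec, gaussVec_update]
  simp [gaussVec, toComplex_I, mul_div_assoc]

lemma omegaHmat_mulVec_gaussVec {j k : Fin n} (hjk : j ≠ k) (q : ℕ) {u : Fin n → ℤ[i]}
    {d : ℤ[i]} (hd : u j - u k = 2 * d) :
    levelOp ![j, k] omegaHmat *ᵥ gaussVec q u = gaussVec q (hadamardStep u j k d) := by
  have hd' : (u j : ℂ) = u k + 2 * d := by
    have := congrArg toComplex hd
    simp only [toComplex_sub, toComplex_mul, map_ofNat] at this
    linear_combination this
  rw [levelOp_pair_mulVec hjk, hadamardStep, gaussVec_update, gaussVec_update]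
  congr 2 <;>
    simp only [omegaHmat, Matrix.smul_apply, of_apply, cons_val', cons_val_zero, cons_val_one,
      cons_val_fin_one, smul_eq_mul, mul_one, mul_neg, neg_mul, gaussVec, hd', map_mul, map_add,
      toComplex_one_add_I] <;>
    ring

lemma levelOp_single_mulVec_single (a : Fin n) (W : Matrix (Fin 1) (Fin 1) ℂ) (z : ℂ) :
    levelOp ![a] W *ᵥ Pi.single a z = Pi.single a (W 0 0 * z) := by
  rw [levelOp_single_mulVec]
  ext x
  rcases eq_or_ne x a with rfl | hx <;> simp [*]

lemma levelOp_Xmat_mulVec_single {a b : Fin n} (hab : a ≠ b) (z : ℂ) :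
    levelOp ![a, b] Xmat *ᵥ Pi.single b z = Pi.single a z := by
  rw [levelOp_pair_mulVec hab]
  ext x
  rcases eq_or_ne x b with rfl | hxb
  · simp [Xmat, hab.symm]
  · simp [Xmat, update_apply, Pi.single_apply, hxb]

lemma hadamardStep_apply_of_ne {u : Fin n → ℤ[i]} {j k x : Fin n} (d : ℤ[i]) (hxj : x ≠ j)
    (hxk : x ≠ k) : hadamardStep u j k d x = u x := by
  rw [hadamardStep, update_of_ne hxk, update_of_ne hxj]

lemma sum_norm_hadamardStep {u : Fin n → ℤ[i]} {j k : Fin n} (hjk : j ≠ k)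
    {d : ℤ[i]} (hd : u j - u k = 2 * d) :
    ∑ x, (hadamardStep u j k d x).norm = ∑ x, (u x).norm := by
  refine sum_eq_sum_of_eq_off_pair hjk ?_ fun x hxj hxk => by
    rw [hadamardStep_apply_of_ne d hxj hxk]
  simp only [hadamardStep, update_self, update_of_ne hjk]
  exact norm_add_norm_of_sub_eq_two_mul hd

lemma oddSupport_hadamardStep_ssubset {u : Fin n → ℤ[i]} {j k : Fin n} (hjk : j ≠ k)
    (d : ℤ[i]) (hj : j ∈ oddSupport u) :
    oddSupport (hadamardStep u j k d) ⊂ oddSupport u := by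
  have heven : ∀ w : ℤ[i], ¬Odd ((⟨1, 1⟩ * w : ℤ[i]).re + (⟨1, 1⟩ * w : ℤ[i]).im) :=
    fun w => Int.not_odd_iff_even.mpr (even_re_add_im_one_add_I_mul w)
  have hsub : oddSupport (hadamardStep u j k d) ⊆ oddSupport u := fun x hx => by
    simp only [mem_oddSupport] at hx ⊢
    rcases eq_or_ne x k with rfl | hxk
    · rw [hadamardStep, update_self] at hx
      exact absurd hx (heven d)
    rcases eq_or_ne x j with rfl | hxj
    · rw [hadamardStep, update_of_ne hxk, update_self] at hx
      exact absurd hx (heven _)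
    rwa [hadamardStep_apply_of_ne d hxj hxk] at hx
  refine (Finset.ssubset_iff_of_subset hsub).mpr ⟨j, hj, ?_⟩
  simp only [mem_oddSupport]
  rw [hadamardStep, update_of_ne hjk, update_self]
  exact heven _

lemma sum_norm_update_I_mul (u : Fin n → ℤ[i]) (k : Fin n) :
    ∑ x, (update u k (⟨0, 1⟩ * u k) x).norm = ∑ x, (u x).norm := by
  refine Finset.sum_congr rfl fun x _ => ?_
  rcases eq_or_ne x k with rfl | hxk
  · rw [update_self, Zsqrtd.norm_mul]
    exact one_mul _
  · rw [update_of_ne hxk]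

lemma oddSupport_update_I_mul (u : Fin n → ℤ[i]) (k : Fin n) :
    oddSupport (update u k (⟨0, 1⟩ * u k)) = oddSupport u := by
  ext x
  simp only [mem_oddSupport]
  rcases eq_or_ne x k with rfl | hxk
  · simp only [update_self, Zsqrtd.re_mul, Zsqrtd.im_mul, Int.odd_iff]
    omega
  · rw [update_of_ne hxk]

lemma exists_ne_mem_oddSupport {u : Fin n → ℤ[i]} (heven : Even (∑ x, (u x).norm)) {j : Fin n}
    (hj : j ∈ oddSupport u) : ∃ k ≠ j, k ∈ oddSupport u := by
  by_contra! h
  have hrest : Even (∑ x ∈ Finset.univ.erase j, (u x).norm) :=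
    Finset.even_sum _ fun x hx => (even_norm_iff _).mpr <| Int.not_odd_iff_even.mp <| by
      simpa using h x (Finset.ne_of_mem_erase hx)
  rw [← Finset.add_sum_erase _ _ (Finset.mem_univ j), Int.even_add] at heven
  simp only [mem_oddSupport] at hj
  exact Int.not_even_iff_odd.mpr hj ((even_norm_iff _).mp (heven.mpr hrest))

def IsGaussGenFrom (c : Fin n) (G : Matrix (Fin n) (Fin n) ℂ) : Prop :=
  (∃ a, c ≤ a ∧ G = levelOp ![a] !![I]) ∨
  (∃ a b, a ≠ b ∧ c ≤ a ∧ c ≤ b ∧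
    (G = levelOp ![a, b] Xmat ∨ G = levelOp ![a, b] omegaHmat))

lemma IsGaussGenFrom.isGaussGen {c : Fin n} {G : Matrix (Fin n) (Fin n) ℂ}
    (hG : IsGaussGenFrom c G) : IsGaussGen G := by
  rcases hG with ⟨a, -, rfl⟩ | ⟨a, b, hab, -, -, rfl | rfl⟩
  exacts [Or.inl ⟨a, rfl⟩, Or.inr (Or.inl ⟨a, b, hab, rfl⟩),
    Or.inr (Or.inr ⟨a, b, hab, rfl⟩)]

lemma IsGaussGenFrom.mulVec_single {c : Fin n} {G : Matrix (Fin n) (Fin n) ℂ}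
    (hG : IsGaussGenFrom c G) {k : Fin n} (hk : k < c) (z : ℂ) :
    G *ᵥ Pi.single k z = Pi.single k z := by
  have hzero : ∀ a, c ≤ a → (Pi.single k z : Fin n → ℂ) a = 0 := fun a ha => by
    rw [Pi.single_apply, if_neg (hk.trans_le ha).ne']
  have hfix : ∀ a, c ≤ a → update (Pi.single k z : Fin n → ℂ) a 0 = Pi.single k z :=
    fun a ha => update_eq_self_iff.mpr (hzero a ha).symm
  rcases hG with ⟨a, ha, rfl⟩ | ⟨a, b, hab, ha, hb, rfl | rfl⟩
  · rw [levelOp_single_mulVec, hzero a ha, mul_zero, hfix a ha]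
  all_goals rw [levelOp_pair_mulVec hab, hzero a ha, hzero b hb]; simp only [mul_zero, add_zero]
  all_goals rw [hfix a ha, hfix b hb]

lemma list_prod_mulVec_single_of_isGaussGenFrom {c : Fin n} {L : List (Matrix (Fin n) (Fin n) ℂ)}
    (hL : ∀ G ∈ L, IsGaussGenFrom c G) {k : Fin n} (hk : k < c) (z : ℂ) :
    L.prod *ᵥ Pi.single k z = Pi.single k z := by
  induction L with
  | nil => rw [List.prod_nil, one_mulVec]
  | cons G L ih =>
    rw [List.prod_cons, ← mulVec_mulVec, ih fun G' hG' => hL G' (List.mem_cons_of_mem _ hG'),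
      (hL G List.mem_cons_self).mulVec_single hk]

lemma exists_eq_single_of_sum_norm_eq_one {u : Fin n → ℤ[i]} (h : ∑ x, (u x).norm = 1) :
    ∃ j, (u j).norm = 1 ∧ ∀ x ≠ j, u x = 0 := by
  obtain ⟨j, hj⟩ : ∃ j, u j ≠ 0 := by
    by_contra! h0
    simp [h0] at h
  have hsplit := Finset.add_sum_erase Finset.univ (fun x => (u x).norm) (Finset.mem_univ j)
  have hpos := norm_pos.mpr hj
  have hrest : 0 ≤ ∑ x ∈ Finset.univ.erase j, (u x).norm :=
    Finset.sum_nonneg fun x _ => norm_nonneg _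
  have hrest0 : ∑ x ∈ Finset.univ.erase j, (u x).norm = 0 := by omega
  refine ⟨j, by omega, fun x hx => norm_eq_zero.mp ?_⟩
  exact (Finset.sum_eq_zero_iff_of_nonneg fun x _ => norm_nonneg _).mp hrest0 x
    (Finset.mem_erase.mpr ⟨hx, Finset.mem_univ x⟩)

lemma le_of_mem_oddSupport {c : Fin n} {u : Fin n → ℤ[i]} (hsupp : ∀ x < c, u x = 0)
    {j : Fin n} (hj : j ∈ oddSupport u) : c ≤ j :=
  not_lt.mp fun h => by simp [hsupp j h] at hj

lemma exists_reduce_column_of_sum_norm_eq_one (c : Fin n) {u : Fin n → ℤ[i]}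
    (hnorm : ∑ x, (u x).norm = 1) (hsupp : ∀ x < c, u x = 0) :
    ∃ (L : List (Matrix (Fin n) (Fin n) ℂ)) (t : ℕ),
      (∀ G ∈ L, IsGaussGenFrom c G) ∧ L.prod *ᵥ gaussVec 0 u = Pi.single c (ω ^ t) := by
  obtain ⟨j, hj, hzero⟩ := exists_eq_single_of_sum_norm_eq_one hnorm
  obtain ⟨s, hs⟩ := exists_I_pow_eq_of_norm_eq_one hj
  have hv : gaussVec 0 u = Pi.single j (ω ^ (2 * s)) := by
    ext x
    rcases eq_or_ne x j with rfl | hx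
    · simp [gaussVec, hs, pow_mul, ω_sq]
    · simp [gaussVec, hzero x hx, hx]
  have hcj : c ≤ j := not_lt.mp fun h => by simp [hsupp j h] at hj
  rcases eq_or_ne c j with rfl | hcj'
  · exact ⟨[], 2 * s, by simp, by rw [List.prod_nil, one_mulVec, hv]⟩
  · refine ⟨[levelOp ![c, j] Xmat], 2 * s, ?_, ?_⟩
    · exact List.forall_mem_singleton.mpr (Or.inr ⟨c, j, hcj', le_rfl, hcj, Or.inl rfl⟩)
    · rw [List.prod_singleton, hv, levelOp_Xmat_mulVec_single hcj']

lemma exists_reduce_oddSupport {c : Fin n} {u : Fin n → ℤ[i]} (heven : Even (∑ x, (u x).norm))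
    (hsupp : ∀ x < c, u x = 0) {j : Fin n} (hj : j ∈ oddSupport u) (q : ℕ) :
    ∃ (L : List (Matrix (Fin n) (Fin n) ℂ)) (u' : Fin n → ℤ[i]),
      (∀ G ∈ L, IsGaussGenFrom c G) ∧ L.prod *ᵥ gaussVec q u = gaussVec q u' ∧
      ∑ x, (u' x).norm = ∑ x, (u x).norm ∧ (∀ x < c, u' x = 0) ∧
      (oddSupport u').card < (oddSupport u).card := by
  obtain ⟨k, hkj, hk⟩ := exists_ne_mem_oddSupport heven hj
  have hjk := hkj.symm
  have hcj := le_of_mem_oddSupport hsupp hj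
  have hck := le_of_mem_oddSupport hsupp hk
  have hH : IsGaussGenFrom c (levelOp ![j, k] omegaHmat) :=
    Or.inr ⟨j, k, hjk, hcj, hck, Or.inr rfl⟩
  have hsupp' : ∀ (u₁ : Fin n → ℤ[i]) (d : ℤ[i]), (∀ x < c, u₁ x = 0) →
      ∀ x < c, hadamardStep u₁ j k d x = 0 := fun u₁ d h₁ x hx => by
    rw [hadamardStep_apply_of_ne d (hx.trans_le hcj).ne (hx.trans_le hck).ne, h₁ x hx]
  rcases two_dvd_sub_or_two_dvd_sub_I_mul (mem_oddSupport.mp hj) (mem_oddSupport.mp hk)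
    with ⟨d, hd⟩ | ⟨d, hd⟩
  · refine ⟨[levelOp ![j, k] omegaHmat], hadamardStep u j k d,
      List.forall_mem_singleton.mpr hH, ?_, sum_norm_hadamardStep hjk hd, hsupp' u d hsupp,
      Finset.card_lt_card (oddSupport_hadamardStep_ssubset hjk d hj)⟩
    rw [List.prod_singleton, omegaHmat_mulVec_gaussVec hjk q hd]
  · set u₁ := update u k (⟨0, 1⟩ * u k)
    have hd₁ : u₁ j - u₁ k = 2 * d := by simpa [u₁, update_of_ne hjk] using hd
    have hodd₁ : j ∈ oddSupport u₁ := by rwa [oddSupport_update_I_mul]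
    refine ⟨[levelOp ![j, k] omegaHmat, levelOp ![k] !![I]], hadamardStep u₁ j k d, ?_, ?_,
      (sum_norm_hadamardStep hjk hd₁).trans (sum_norm_update_I_mul u k), ?_, ?_⟩
    · exact List.forall_mem_cons.mpr
        ⟨hH, List.forall_mem_singleton.mpr (Or.inl ⟨k, hck, rfl⟩)⟩
    · rw [List.prod_cons, List.prod_singleton, ← mulVec_mulVec, levelOp_I_mulVec_gaussVec,
        omegaHmat_mulVec_gaussVec hjk q hd₁]
    · refine hsupp' u₁ d fun x hx => ?_
      rw [show u₁ x = u x from update_of_ne (hx.trans_le hck).ne _ _, hsupp x hx]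
    · rw [← oddSupport_update_I_mul u k]
      exact Finset.card_lt_card (oddSupport_hadamardStep_ssubset hjk d hodd₁)

lemma exists_reduce_column (c : Fin n) (q : ℕ) (u : Fin n → ℤ[i])
    (hnorm : ∑ x, (u x).norm = 2 ^ q) (hsupp : ∀ x < c, u x = 0) :
    ∃ (L : List (Matrix (Fin n) (Fin n) ℂ)) (t : ℕ),
      (∀ G ∈ L, IsGaussGenFrom c G) ∧ L.prod *ᵥ gaussVec q u = Pi.single c (ω ^ t) := by
  -- Lexicographic in `(q, #oddSupport u)`, as `#oddSupport u ≤ n`.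
  induction hm : (n + 1) * q + (oddSupport u).card using Nat.strong_induction_on
    generalizing q u with
  | _ m ih =>
  rcases q with _ | q
  · exact exists_reduce_column_of_sum_norm_eq_one c (by simpa using hnorm) hsupp
  rcases (oddSupport u).eq_empty_or_nonempty with hodd | ⟨j, hj⟩
  · have heven : ∀ x, Even ((u x).re + (u x).im) := fun x => Int.not_odd_iff_even.mp fun h =>
      (Finset.eq_empty_iff_forall_notMem.mp hodd) x (mem_oddSupport.mpr h)
    choose w hw using fun x => exists_eq_one_add_I_mul (heven x)
    have hnorm' : ∑ x, (w x).norm = 2 ^ q := by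
      simp only [hw, norm_one_add_I_mul, ← Finset.mul_sum, pow_succ'] at hnorm
      omega
    have hsupp' : ∀ x < c, w x = 0 := fun x hx => by
      simpa [hw x, show (⟨1, 1⟩ : ℤ[i]) ≠ 0 by decide] using hsupp x hx
    have hcard : (oddSupport w).card ≤ n := (Finset.card_le_univ _).trans_eq (Fintype.card_fin n)
    obtain ⟨L, t, hL, hLw⟩ := ih _ (by rw [← hm]; nlinarith) q w hnorm' hsupp' rfl
    refine ⟨L, t + 1, hL, ?_⟩
    rw [show u = fun x => ⟨1, 1⟩ * w x from funext hw, gaussVec_one_add_I_mul, mulVec_smul, hLw,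
      ← Pi.single_smul, smul_eq_mul, pow_succ']
  · obtain ⟨L, u', hL, hLu, hnorm', hsupp', hcard⟩ :=
      exists_reduce_oddSupport (by rw [hnorm]; exact even_two.pow_of_ne_zero q.succ_ne_zero)
        hsupp hj (q + 1)
    obtain ⟨L', t, hL', hL'u⟩ := ih _ (by omega) (q + 1) u' (hnorm'.trans hnorm) hsupp' rfl
    refine ⟨L' ++ L, t, List.forall_mem_append.mpr ⟨hL', hL⟩, ?_⟩
    rw [List.prod_append, ← mulVec_mulVec, hLu, hL'u]

lemma list_replicate_I_prod_mulVec_single (c : Fin n) (m : ℕ) (z : ℂ) :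
    (List.replicate m (levelOp ![c] !![I])).prod *ᵥ Pi.single c z = Pi.single c (I ^ m * z) := by
  induction m generalizing z with
  | zero => rw [List.replicate_zero, List.prod_nil, one_mulVec, pow_zero, one_mul]
  | succ m ih =>
    rw [List.replicate_succ', List.prod_append, List.prod_singleton, ← mulVec_mulVec,
      levelOp_single_mulVec_single, ih, pow_succ, mul_assoc]
    rfl

lemma exists_reduce_column_exponent_le_one (c : Fin n) (q : ℕ) (u : Fin n → ℤ[i])
    (hnorm : ∑ x, (u x).norm = 2 ^ q) (hsupp : ∀ x < c, u x = 0) :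
    ∃ (L : List (Matrix (Fin n) (Fin n) ℂ)) (t : ℕ), t ≤ 1 ∧
      (∀ G ∈ L, IsGaussGenFrom c G) ∧ L.prod *ᵥ gaussVec q u = Pi.single c (ω ^ t) := by
  obtain ⟨L, t, hL, hLu⟩ := exists_reduce_column c q u hnorm hsupp
  refine ⟨List.replicate (3 * (t / 2)) (levelOp ![c] !![I]) ++ L, t % 2, by omega,
    List.forall_mem_append.mpr ⟨fun G hG => ?_, hL⟩, ?_⟩
  · rw [List.eq_of_mem_replicate hG]
    exact Or.inl ⟨c, le_rfl, rfl⟩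
  · rw [List.prod_append, ← mulVec_mulVec, hLu, list_replicate_I_prod_mulVec_single,
      I_pow_mul_ω_pow]

end ColumnReduction

section Synthesis

open GaussianInt

lemma IsGaussDyadic.exists_col_eq_gaussVec {Q : ℕ} {M : Matrix (Fin n) (Fin n) ℂ}
    (hM : IsGaussDyadic Q M) (k : Fin n) : ∃ u, M.col k = gaussVec Q u := by
  choose u hu using fun j => hM j k
  refine ⟨u, funext fun j => ?_⟩
  rw [col_apply, gaussVec, hu, mul_div_cancel_left₀ _ (pow_ne_zero _ sqrt_two_ne_zero)]

lemma sum_norm_eq_of_sum_star_mul_self {Q : ℕ} {u : Fin n → ℤ[i]}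
    (h : ∑ j, star (gaussVec Q u j) * gaussVec Q u j = 1) : ∑ j, (u j).norm = 2 ^ Q := by
  have hterm : ∀ j, star (gaussVec Q u j) * gaussVec Q u j = ((u j).norm : ℂ) / 2 ^ Q := by
    intro j
    rw [intCast_complex_norm, normSq_eq_conj_mul_self, gaussVec, ← sqrt_two_sq, ← pow_mul,
      mul_comm 2, pow_mul]
    simp only [star_div₀, RCLike.star_def, star_pow, conj_ofReal]
    ring
  rw [Finset.sum_congr rfl fun j _ => hterm j, ← Finset.sum_div,
    div_eq_one_iff_eq (pow_ne_zero _ two_ne_zero)] at h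
  exact_mod_cast h

lemma exists_reduce_columns {V : Matrix (Fin n) (Fin n) ℂ} (hV : V ∈ unitaryGroup (Fin n) ℂ)
    {q : ℕ} (hVq : IsGaussDyadic q V) (d : ℕ) (hd : d ≤ n) :
    ∃ L : List (Matrix (Fin n) (Fin n) ℂ), (∀ G ∈ L, IsGaussGen G) ∧
      ∀ k : Fin n, (k : ℕ) < d → ∃ t ≤ 1, (L.prod * V).col k = Pi.single k (ω ^ t) := by
  induction d with
  | zero => exact ⟨[], by simp, fun k hk => absurd hk k.val.not_lt_zero⟩
  | succ d ih =>
  obtain ⟨L, hL, hcols⟩ := ih (by omega)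
  set c : Fin n := ⟨d, hd⟩
  obtain ⟨u, hu⟩ := ((isGaussDyadic_list_prod hL).mul hVq).exists_col_eq_gaussVec c
  set M := L.prod * V
  have hMu : M ∈ unitaryGroup (Fin n) ℂ := mul_mem (IsGaussGen.list_prod_mem_unitaryGroup hL) hV
  have hnorm : ∑ x, (u x).norm = 2 ^ (2 * L.length + q) := by
    refine sum_norm_eq_of_sum_star_mul_self ?_
    have h := congrFun (congrFun (mem_unitaryGroup_iff'.mp hMu) c) c
    simpa only [mul_apply, star_apply, one_apply_eq, ← col_apply M c, hu] using h
  have hsupp : ∀ x < c, u x = 0 := fun x hx => by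
    obtain ⟨t, -, ht⟩ := hcols x hx
    have h := apply_eq_zero_of_col_eq_single hMu hx.ne (pow_ne_zero t ω_ne_zero) ht
    rw [← col_apply M c, hu, gaussVec, div_eq_zero_iff] at h
    exact toComplex_eq_zero.mp (h.resolve_right (pow_ne_zero _ sqrt_two_ne_zero))
  obtain ⟨L', t, ht, hL', hL'u⟩ := exists_reduce_column_exponent_le_one c _ u hnorm hsupp
  refine ⟨L' ++ L, List.forall_mem_append.mpr ⟨fun G hG => (hL' G hG).isGaussGen, hL⟩,
    fun k hk => ?_⟩
  rw [List.prod_append, mul_assoc]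
  rcases Nat.lt_succ_iff_lt_or_eq.mp hk with hk | hk
  · obtain ⟨t', ht', hM⟩ := hcols k hk
    exact ⟨t', ht', by rw [col_mul, hM, list_prod_mulVec_single_of_isGaussGenFrom hL' hk]⟩
  · obtain rfl : k = c := Fin.ext hk
    exact ⟨t, ht, by rw [col_mul, hu, hL'u]⟩

lemma eq_ω_pow_smul_one {Q : ℕ} {M : Matrix (Fin n) (Fin n) ℂ} (hM : IsGaussDyadic Q M)
    (hcols : ∀ k, ∃ t ≤ 1, M.col k = Pi.single k (ω ^ t)) : M = ω ^ (Q % 2) • 1 := by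
  ext j k
  obtain ⟨t, ht, hk⟩ := hcols k
  have hcol : ∀ j, M j k = (Pi.single k (ω ^ t) : Fin n → ℂ) j := congrFun hk
  have htQ := eq_mod_two_of_sqrt_two_pow_mul_ω_pow_mem ht (by simpa [hcol] using hM k k)
  rw [hcol, Matrix.smul_apply, one_apply, Pi.single_apply, htQ]
  split_ifs <;> simp

end Synthesis

end GaussianSynthesis

open GaussianSynthesis

theorem stmt5_general (n : ℕ) (V : Matrix (Fin n) (Fin n) ℂ)
    (hV : V ∈ Matrix.unitaryGroup (Fin n) ℂ)
    (A B : Matrix (Fin n) (Fin n) ℤ) (q : ℕ)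
    (hW : ∀ j k, V j k = ((A j k : ℂ) + (B j k : ℂ) * Complex.I) / (Real.sqrt 2 : ℂ) ^ q) :
    ∃ L : List (Matrix (Fin n) (Fin n) ℂ),
      (∀ G ∈ L, IsGaussGenOmega G) ∧ L.prod * V = 1 := by
  have hVq : IsGaussDyadic q V := fun j k =>
    ⟨⟨A j k, B j k⟩, by rw [hW, GaussianInt.toComplex_def',
      mul_div_cancel₀ _ (pow_ne_zero _ sqrt_two_ne_zero)]⟩
  obtain ⟨L, hL, hcols⟩ := exists_reduce_columns hV hVq n le_rfl
  set p := (2 * L.length + q) % 2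
  have hM : L.prod * V = ω ^ p • 1 :=
    eq_ω_pow_smul_one ((isGaussDyadic_list_prod hL).mul hVq) fun k => hcols k k.isLt
  refine ⟨List.replicate (7 * p) (ω • 1) ++ L,
    List.forall_mem_append.mpr
      ⟨fun G hG => Or.inr (List.eq_of_mem_replicate hG), fun G hG => Or.inl (hL G hG)⟩, ?_⟩
  rw [List.prod_append, List.prod_replicate, mul_assoc, hM, smul_pow, one_pow,
    smul_mul_smul_comm, one_mul, ← pow_add, show 7 * p + p = 8 * p by ring, pow_mul,
    ω_pow_eight, one_pow, one_smul]

/-- Every unitary matrix of the form `W/√2^q` with `W` a matrix over the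
Gaussian integers `ℤ[i]` is a product of the generators `i_[a]`, `X_[a,b]`,
`(ωH)_[a,b]`, and `ω·I_n`. -/
theorem stmt5 (n : ℕ) (hn : 1 ≤ n) (V : Matrix (Fin n) (Fin n) ℂ)
    (hV : V ∈ Matrix.unitaryGroup (Fin n) ℂ)
    (A B : Matrix (Fin n) (Fin n) ℤ) (q : ℕ)
    (hW : ∀ j k, V j k = ((A j k : ℂ) + (B j k : ℂ) * Complex.I) / (Real.sqrt 2 : ℂ) ^ q) :
    ∃ L : List (Matrix (Fin n) (Fin n) ℂ),
      (∀ G ∈ L, IsGaussGenOmega G) ∧ L.prod * V = 1 :=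
  stmt5_general n V hV A B q hW
end
end

section
/- If u₁, u₂, u₃, u₄ are integers such that u₁² ≡ u₂² ≡ u₃² ≡ u₄² ≡ 1 (mod 4), then there exist m₁, m₂, m₃, m₄ ∈ ℕ such that the vector (H⊗H)·((-1)^{m₁}u₁, (-1)^{m₂}u₂, (-1)^{m₃}u₃, (-1)^{m₄}u₄)ᵀ equals (u₁', u₂', u₃', u₄')ᵀ for some integers u₁', u₂', u₃', u₄' that are all even. -/
open Matrix Complex

noncomputable section

/-- Given integers `u₁, …, u₄` with `uⱼ² ≡ 1 (mod 4)`, the signs of the `uⱼ`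
can be adjusted so that `H ⊗ H` maps the resulting vector to a vector of even
integers. -/
theorem stmt6 (u : Fin 4 → ℤ) (hu : ∀ j, u j ^ 2 ≡ 1 [ZMOD 4]) :
    ∃ (m : Fin 4 → ℕ) (u' : Fin 4 → ℤ),
      (∀ j, Even (u' j)) ∧
      HHmat.mulVec (fun j => ((-1 : ℂ) ^ (m j) * (u j : ℂ))) = fun j => (u' j : ℂ) := by
  have hmod : ∀ j, u j % 4 = 1 ∨ u j % 4 = 3 := by
    intro j
    have h : (4 : ℤ) ∣ 1 - u j ^ 2 := (hu j).dvd
    rcases Int.even_or_odd (u j) with ⟨a, ha⟩ | ⟨a, ha⟩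
    · exfalso
      have h2 : u j ^ 2 = 4 * (a * a) := by rw [ha]; ring
      rw [h2] at h
      obtain ⟨k, hk⟩ := h
      omega
    · omega
  set m : Fin 4 → ℕ := fun j => if u j % 4 = 1 then 0 else 1 with hm
  set v : Fin 4 → ℤ := fun j => if u j % 4 = 1 then u j else -u j with hvdef
  have hv : ∀ j, v j % 4 = 1 := by
    intro j
    rcases hmod j with h | h <;> simp [hvdef, h] <;> omega
  have hvc : ∀ j, ((-1 : ℂ) ^ (m j) * (u j : ℂ)) = ((v j : ℤ) : ℂ) := by
    intro j
    by_cases h : u j % 4 = 1 <;> simp [hm, hvdef, h]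
  refine ⟨m, ![(v 0 + v 1 + v 2 + v 3)/2, (v 0 - v 1 + v 2 - v 3)/2,
    (v 0 + v 1 - v 2 - v 3)/2, (v 0 - v 1 - v 2 + v 3)/2], ?_, ?_⟩
  · have h0 := hv 0; have h1 := hv 1; have h2 := hv 2; have h3 := hv 3
    intro j
    fin_cases j <;> simp [Int.even_iff] <;> omega
  · have h0 := hv 0; have h1 := hv 1; have h2 := hv 2; have h3 := hv 3
    funext j
    fin_cases j
    · simp [HHmat, mulVec, dotProduct, Fin.sum_univ_four, hvc]
      have h : ((v 0 + v 1 + v 2 + v 3 : ℤ) : ℂ)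
          = 2 * (((v 0 + v 1 + v 2 + v 3)/2 : ℤ) : ℂ) := by
        exact_mod_cast congrArg (Int.cast : ℤ → ℂ)
          (show v 0 + v 1 + v 2 + v 3 = 2 * ((v 0 + v 1 + v 2 + v 3)/2) by omega)
      push_cast at h ⊢
      linear_combination h/2
    · simp [HHmat, mulVec, dotProduct, Fin.sum_univ_four, hvc]
      have h : ((v 0 - v 1 + v 2 - v 3 : ℤ) : ℂ)
          = 2 * (((v 0 - v 1 + v 2 - v 3)/2 : ℤ) : ℂ) := by
        exact_mod_cast congrArg (Int.cast : ℤ → ℂ)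
          (show v 0 - v 1 + v 2 - v 3 = 2 * ((v 0 - v 1 + v 2 - v 3)/2) by omega)
      push_cast at h ⊢
      linear_combination h/2
    · simp [HHmat, mulVec, dotProduct, Fin.sum_univ_four, hvc]
      have h : ((v 0 + v 1 - v 2 - v 3 : ℤ) : ℂ)
          = 2 * (((v 0 + v 1 - v 2 - v 3)/2 : ℤ) : ℂ) := by
        exact_mod_cast congrArg (Int.cast : ℤ → ℂ)
          (show v 0 + v 1 - v 2 - v 3 = 2 * ((v 0 + v 1 - v 2 - v 3)/2) by omega)
      push_cast at h ⊢
      linear_combination h/2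
    · simp [HHmat, mulVec, dotProduct, Fin.sum_univ_four, hvc]
      have h : ((v 0 - v 1 - v 2 + v 3 : ℤ) : ℂ)
          = 2 * (((v 0 - v 1 - v 2 + v 3)/2 : ℤ) : ℂ) := by
        exact_mod_cast congrArg (Int.cast : ℤ → ℂ)
          (show v 0 - v 1 - v 2 + v 3 = 2 * ((v 0 - v 1 - v 2 + v 3)/2) by omega)
      push_cast at h ⊢
      linear_combination h/2
end
end

section
/- Let n ≥ 1, let j ∈ {1,…,n}, and let v be an n-dimensional unit vector all of whose entries lie in ℤ[1/2]. Then there exist finitely many generators G₁, …, G_ℓ, each taken from the set {(-1)_[a], X_[a,b], (H⊗H)_[a,b,c,d] : a, b, c, d distinct elements of {1,…,n}}, such that G₁ ⋯ G_ℓ v = e_j, the j-th standard basis vector. -/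
open Matrix Complex

noncomputable section

/-!
Write `v = u / 2 ^ q` with `u` integral, so that `∑ uₖ² = 4 ^ q`. Odd squares are `1 mod 4`,
hence for `q > 0` the number of odd entries of `u` is a multiple of `4`. Once the entries
that are `3 mod 4` are negated, any four odd entries are `1 mod 4`, and `H⊗H` replaces them by
halves of the sums `±a ± b ± c ± d`, which are multiples of `4`: the four entries become even,
the others are unchanged, and the sum of squares is preserved because `H⊗H` is orthogonal.
Repeating this makes `u` even, which lowers `q` by one. At `q = 0` the vector is `±eₖ`, and
`(-1)_[k]` and `X_[k,j]` finish.
-/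

section
variable {n m : ℕ}

theorem levelOp_mulVec_apply (f : Fin m → Fin n) (W : Matrix (Fin m) (Fin m) ℂ)
    (w : Fin n → ℂ) (k : Fin n) :
    (levelOp f W *ᵥ w) k =
      (∑ i, ∑ l, if f i = k then W i l * w (f l) else 0) +
      (if ∀ i, f i ≠ k then w k else 0) := by
  simp only [mulVec, dotProduct, levelOp, add_mul, Finset.sum_add_distrib, Finset.sum_mul,
    ite_and, ite_mul, zero_mul, one_mul]
  rw [Finset.sum_comm]
  simp [Finset.sum_comm (γ := Fin n), eq_comm]

theorem levelOp_mulVec_apply_self {f : Fin m → Fin n} (hf : Function.Injective f)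
    (W : Matrix (Fin m) (Fin m) ℂ) (w : Fin n → ℂ) (i : Fin m) :
    (levelOp f W *ᵥ w) (f i) = (W *ᵥ (w ∘ f)) i := by
  rw [levelOp_mulVec_apply]
  simp [hf.eq_iff, mulVec, dotProduct]

theorem levelOp_mulVec_apply_of_forall_ne {f : Fin m → Fin n}
    (W : Matrix (Fin m) (Fin m) ℂ) (w : Fin n → ℂ) {k : Fin n} (hk : ∀ i, f i ≠ k) :
    (levelOp f W *ᵥ w) k = w k := by
  simp [levelOp_mulVec_apply, hk]

theorem levelOp_mulVec_eq {f : Fin m → Fin n} (hf : Function.Injective f)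
    {W : Matrix (Fin m) (Fin m) ℂ} {w w' : Fin n → ℂ}
    (h_range : ∀ i, w' (f i) = (W *ᵥ (w ∘ f)) i)
    (h_compl : ∀ k, (∀ i, f i ≠ k) → w' k = w k) :
    levelOp f W *ᵥ w = w' := by
  ext k
  by_cases hk : ∃ i, f i = k
  · obtain ⟨i, rfl⟩ := hk
    rw [levelOp_mulVec_apply_self hf, h_range]
  · push Not at hk
    rw [levelOp_mulVec_apply_of_forall_ne W w hk, h_compl k hk]

theorem sum_sq_levelOp_mulVec {f : Fin m → Fin n} (hf : Function.Injective f)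
    {W : Matrix (Fin m) (Fin m) ℂ} (hW : Wᵀ * W = 1) (w : Fin n → ℂ) :
    ∑ k, (levelOp f W *ᵥ w) k ^ 2 = ∑ k, w k ^ 2 := by
  classical
  have hsplit : ∀ g : Fin n → ℂ, ∑ k, g k ^ 2 =
      ∑ i, g (f i) ^ 2 + ∑ k ∈ (Finset.univ.map ⟨f, hf⟩)ᶜ, g k ^ 2 := fun g => by
    rw [← Finset.sum_add_sum_compl (Finset.univ.map ⟨f, hf⟩), Finset.sum_map]
    rfl
  rw [hsplit, hsplit w]
  congr 1
  · have h := dotProduct_mulVec (W *ᵥ (w ∘ f)) W (w ∘ f)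
    rw [← transpose_transpose W, vecMul_transpose, mulVec_mulVec, transpose_transpose, hW,
      one_mulVec] at h
    simpa [levelOp_mulVec_apply_self hf, dotProduct, sq] using h
  · refine Finset.sum_congr rfl fun k hk => ?_
    rw [levelOp_mulVec_apply_of_forall_ne]
    simpa using hk

theorem HHmat_transpose_mul_self : HHmatᵀ * HHmat = 1 := by
  ext i j
  fin_cases i <;> fin_cases j <;> simp [HHmat, mul_apply, Fin.sum_univ_four] <;> norm_num

abbrev Reaches : (Fin n → ℂ) → (Fin n → ℂ) → Prop :=
  Relation.ReflTransGen fun v w => ∃ G, IsIntGen G ∧ G *ᵥ v = w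

theorem Reaches.exists_list {v w : Fin n → ℂ} (h : Reaches v w) :
    ∃ L : List (Matrix (Fin n) (Fin n) ℂ), (∀ G ∈ L, IsIntGen G) ∧ L.prod *ᵥ v = w := by
  induction h with
  | refl => exact ⟨[], by simp, by simp⟩
  | tail _ hstep ih =>
    obtain ⟨G, hG, rfl⟩ := hstep
    obtain ⟨L, hL, rfl⟩ := ih
    exact ⟨G :: L, by simpa using ⟨hG, hL⟩, by simp [mulVec_mulVec]⟩

theorem reaches_update_neg (w : Fin n → ℂ) (a : Fin n) :
    Reaches w (Function.update w a (-w a)) := by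
  refine .single ⟨_, .inl ⟨a, rfl⟩,
    levelOp_mulVec_eq (Function.injective_of_subsingleton _) ?_ ?_⟩
  · intro i; fin_cases i; simp [mulVec, dotProduct]
  · intro k hk
    exact Function.update_of_ne (hk 0).symm _ _

theorem reaches_comp_swap (w : Fin n → ℂ) {a b : Fin n} (hab : a ≠ b) :
    Reaches w (w ∘ Equiv.swap a b) := by
  refine .single ⟨_, .inr (.inl ⟨a, b, hab, rfl⟩), levelOp_mulVec_eq ?_ ?_ ?_⟩
  · intro i j; fin_cases i <;> fin_cases j <;> simp [hab, hab.symm]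
  · intro i; fin_cases i <;> simp [Xmat, mulVec, dotProduct, Fin.sum_univ_two]
  · intro k hk
    exact congrArg w (Equiv.swap_apply_of_ne_of_ne (hk 0).symm (hk 1).symm)

theorem reaches_HHmat_mulVec (w : Fin n → ℂ) (f : Fin 4 ↪ Fin n) :
    Reaches w (levelOp f HHmat *ᵥ w) := by
  have hf : ![f 0, f 1, f 2, f 3] = f := by ext i; fin_cases i <;> rfl
  refine .single ⟨_, .inr (.inr ⟨f 0, f 1, f 2, f 3, ?_⟩), rfl⟩
  rw [hf]
  exact ⟨f.injective.ne (by decide), f.injective.ne (by decide), f.injective.ne (by decide),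
    f.injective.ne (by decide), f.injective.ne (by decide), f.injective.ne (by decide), rfl⟩

def dyadicVec (q : ℕ) (u : Fin n → ℤ) : Fin n → ℂ := fun k => (u k : ℂ) / 2 ^ q

theorem sum_sq_dyadicVec (q : ℕ) (u : Fin n → ℤ) :
    ∑ k, dyadicVec q u k ^ 2 = ((∑ k, u k ^ 2 : ℤ) : ℂ) / 4 ^ q := by
  have h4 : ((2 : ℂ) ^ q) ^ 2 = 4 ^ q := by rw [← pow_mul, mul_comm, pow_mul]; norm_num
  simp only [dyadicVec, div_pow, h4, ← Finset.sum_div]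
  push_cast
  rfl

theorem dyadicVec_succ_two_mul (q : ℕ) (u : Fin n → ℤ) :
    dyadicVec (q + 1) (fun k => 2 * u k) = dyadicVec q u := by
  ext k
  simp only [dyadicVec, pow_succ]
  push_cast
  field_simp

theorem reaches_neg_on (T : Finset (Fin n)) (w : Fin n → ℂ) :
    Reaches w (fun k => if k ∈ T then -w k else w k) := by
  classical
  induction T using Finset.induction_on with
  | empty =>
    simp only [Finset.notMem_empty, if_false]
    exact .refl
  | insert a T ha ih =>
    have h := ih.trans (reaches_update_neg _ a)
    convert h using 1
    ext k
    by_cases hk : k = a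
    · subst hk; simp [ha]
    · simp [hk]

theorem exists_reaches_dyadicVec_odd_eq_one (q : ℕ) (u : Fin n → ℤ) :
    ∃ u' : Fin n → ℤ, Reaches (dyadicVec q u) (dyadicVec q u') ∧
      ∑ k, u' k ^ 2 = ∑ k, u k ^ 2 ∧ ∀ k, Odd (u' k) → (u' k : ZMod 4) = 1 := by
  classical
  let T := Finset.univ.filter fun k => (u k : ZMod 4) = 3
  refine ⟨fun k => if k ∈ T then -u k else u k, ?_, ?_, fun k hk => ?_⟩
  · convert reaches_neg_on T (dyadicVec q u) using 1
    ext k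
    split_ifs with h <;> simp [dyadicVec, h, neg_div]
  · refine Finset.sum_congr rfl fun k _ => ?_
    dsimp only
    split_ifs <;> simp
  · dsimp only at hk ⊢
    obtain ⟨m, hm⟩ : Odd (u k) := by split_ifs at hk <;> simpa using hk
    have key : ∀ x : ZMod 4,
        (2 * x + 1 = 3 → -(2 * x + 1) = 1) ∧ (2 * x + 1 ≠ 3 → 2 * x + 1 = 1) := by
      decide
    simp only [T, Finset.mem_filter, Finset.mem_univ, true_and, hm]
    push_cast
    split_ifs with h
    · exact (key _).1 h
    · exact (key _).2 h

def hadamardSigns : Matrix (Fin 4) (Fin 4) ℤ :=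
  !![1, 1, 1, 1; 1, -1, 1, -1; 1, 1, -1, -1; 1, -1, -1, 1]

theorem HHmat_mulVec_intCast_div_apply (q : ℕ) (y : Fin 4 → ℤ) (i : Fin 4) :
    (HHmat *ᵥ fun l => (y l : ℂ) / 2 ^ q) i =
      ((hadamardSigns *ᵥ y) i : ℂ) / 2 ^ (q + 1) := by
  fin_cases i <;>
  · simp [HHmat, hadamardSigns, mulVec, dotProduct, Fin.sum_univ_four, pow_succ]
    ring

theorem four_dvd_hadamardSigns_mulVec {y : Fin 4 → ℤ} (hy : ∀ l, (y l : ZMod 4) = 1)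
    (i : Fin 4) :
    4 ∣ (hadamardSigns *ᵥ y) i := by
  refine (ZMod.intCast_zmod_eq_zero_iff_dvd _ 4).1 ?_
  fin_cases i <;> simp [hadamardSigns, mulVec, dotProduct, Fin.sum_univ_four, hy]
  decide

theorem exists_reaches_dyadicVec_even_on (q : ℕ) (u : Fin n → ℤ) (f : Fin 4 ↪ Fin n)
    (hu : ∀ i, (u (f i) : ZMod 4) = 1) :
    ∃ u' : Fin n → ℤ, Reaches (dyadicVec q u) (dyadicVec q u') ∧
      ∑ k, u' k ^ 2 = ∑ k, u k ^ 2 ∧ (∀ i, Even (u' (f i))) ∧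
      ∀ k, (∀ i, f i ≠ k) → u' k = u k := by
  have hentry : ∀ k, ∃ m : ℤ, (levelOp f HHmat *ᵥ dyadicVec q u) k = m / 2 ^ q ∧
      (∀ i, f i = k → Even m) ∧ ((∀ i, f i ≠ k) → m = u k) := by
    intro k
    by_cases hk : ∃ i, f i = k
    · obtain ⟨i, rfl⟩ := hk
      obtain ⟨t, ht⟩ := four_dvd_hadamardSigns_mulVec (y := u ∘ f) hu i
      refine ⟨2 * t, ?_, fun _ _ => even_two_mul t, fun h => absurd rfl (h i)⟩
      rw [levelOp_mulVec_apply_self f.injective,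
        show dyadicVec q u ∘ f = fun l => ((u ∘ f) l : ℂ) / 2 ^ q from rfl,
        HHmat_mulVec_intCast_div_apply, ht]
      push_cast
      rw [pow_succ]
      field_simp
      ring
    · push Not at hk
      exact ⟨u k, levelOp_mulVec_apply_of_forall_ne _ _ hk, fun i h => absurd h (hk i),
        fun _ => rfl⟩
  choose u' hu'_eq hu'_even hu'_compl using hentry
  have hreach : Reaches (dyadicVec q u) (dyadicVec q u') := by
    convert reaches_HHmat_mulVec (dyadicVec q u) f using 1
    ext k
    exact (hu'_eq k).symm
  refine ⟨u', hreach, ?_, fun i => hu'_even _ i rfl, hu'_compl⟩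
  have h := sum_sq_levelOp_mulVec f.injective HHmat_transpose_mul_self (dyadicVec q u)
  rw [show levelOp f HHmat *ᵥ dyadicVec q u = dyadicVec q u' from funext hu'_eq,
    sum_sq_dyadicVec, sum_sq_dyadicVec,
    div_left_inj' (pow_ne_zero _ (by norm_num))] at h
  exact_mod_cast h

def oddIndices (u : Fin n → ℤ) : Finset (Fin n) := Finset.univ.filter fun k => Odd (u k)

theorem intCast_sq_zmod_four (x : ℤ) : ((x ^ 2 : ℤ) : ZMod 4) = if Odd x then 1 else 0 := by
  obtain ⟨m, rfl | rfl⟩ := Int.even_or_odd' x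
  · rw [if_neg (Int.not_odd_iff_even.2 (even_two_mul m))]
    push_cast
    generalize (m : ZMod 4) = y
    revert y; decide
  · rw [if_pos (odd_two_mul_add_one m)]
    push_cast
    generalize (m : ZMod 4) = y
    revert y; decide

theorem four_dvd_card_oddIndices {u : Fin n → ℤ} (h : 4 ∣ ∑ k, u k ^ 2) :
    4 ∣ (oddIndices u).card := by
  rw [← ZMod.natCast_eq_zero_iff, oddIndices, Finset.card_filter]
  replace h := (ZMod.intCast_zmod_eq_zero_iff_dvd _ 4).2 h
  push_cast at h ⊢
  simpa only [← Int.cast_pow, intCast_sq_zmod_four] using h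

theorem exists_reaches_dyadicVec_card_oddIndices_lt (q : ℕ) (u : Fin n → ℤ)
    (h4 : 4 ∣ ∑ k, u k ^ 2) (h1 : ∀ k, Odd (u k) → (u k : ZMod 4) = 1)
    (hodd : oddIndices u ≠ ∅) :
    ∃ u' : Fin n → ℤ, Reaches (dyadicVec q u) (dyadicVec q u') ∧
      ∑ k, u' k ^ 2 = ∑ k, u k ^ 2 ∧ (∀ k, Odd (u' k) → (u' k : ZMod 4) = 1) ∧
      (oddIndices u').card < (oddIndices u).card := by
  have hcard : 4 ≤ (oddIndices u).card :=
    Nat.le_of_dvd (Finset.card_pos.2 (Finset.nonempty_iff_ne_empty.2 hodd))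
      (four_dvd_card_oddIndices h4)
  obtain ⟨T, hTu, hT⟩ := Finset.exists_subset_card_eq hcard
  let f : Fin 4 ↪ Fin n := (T.orderEmbOfFin hT).toEmbedding
  have hfT : ∀ i, f i ∈ T := fun i => T.orderEmbOfFin_mem hT i
  have hTf : ∀ k ∈ T, ∃ i, f i = k := fun k hk => by
    rw [← Finset.mem_coe, ← T.range_orderEmbOfFin hT] at hk
    exact hk
  have hodd_T : ∀ k ∈ T, Odd (u k) := fun k hk => (Finset.mem_filter.1 (hTu hk)).2
  obtain ⟨u', hreach, hsum, heven, hcompl⟩ :=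
    exists_reaches_dyadicVec_even_on q u f fun i => h1 _ (hodd_T _ (hfT i))
  have hcompl_T : ∀ k, Odd (u' k) → k ∉ T ∧ u' k = u k := fun k hk => by
    have hkT : k ∉ T := fun hkT => by
      obtain ⟨i, rfl⟩ := hTf k hkT
      exact Int.not_odd_iff_even.2 (heven i) hk
    exact ⟨hkT, hcompl k fun i hi => hkT (hi ▸ hfT i)⟩
  refine ⟨u', hreach, hsum, fun k hk => ?_, ?_⟩
  · obtain ⟨-, hk_eq⟩ := hcompl_T k hk
    rw [hk_eq] at hk ⊢
    exact h1 k hk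
  have hsub : oddIndices u' ⊆ oddIndices u \ T := fun k hk => by
    obtain ⟨hkT, hk_eq⟩ := hcompl_T k (Finset.mem_filter.1 hk).2
    simpa [oddIndices, hkT, ← hk_eq] using (Finset.mem_filter.1 hk).2
  calc (oddIndices u').card ≤ (oddIndices u \ T).card := Finset.card_le_card hsub
    _ < (oddIndices u).card := by rw [Finset.card_sdiff_of_subset hTu]; omega

theorem exists_reaches_dyadicVec_even (q : ℕ) (u : Fin n → ℤ)
    (h4 : 4 ∣ ∑ k, u k ^ 2) (h1 : ∀ k, Odd (u k) → (u k : ZMod 4) = 1) :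
    ∃ u' : Fin n → ℤ, Reaches (dyadicVec q u) (dyadicVec q u') ∧
      ∑ k, u' k ^ 2 = ∑ k, u k ^ 2 ∧ ∀ k, Even (u' k) := by
  induction hN : (oddIndices u).card using Nat.strong_induction_on generalizing u with
  | _ N ih =>
  by_cases hodd : oddIndices u = ∅
  · refine ⟨u, .refl, rfl, fun k => Int.not_odd_iff_even.1 fun hk => ?_⟩
    exact Finset.notMem_empty k (hodd ▸ Finset.mem_filter.2 ⟨Finset.mem_univ k, hk⟩)
  · obtain ⟨u₁, hr₁, hs₁, h1₁, hlt⟩ :=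
      exists_reaches_dyadicVec_card_oddIndices_lt q u h4 h1 hodd
    obtain ⟨u₂, hr₂, hs₂, he₂⟩ := ih _ (hN ▸ hlt) u₁ (hs₁ ▸ h4) h1₁ rfl
    exact ⟨u₂, hr₁.trans hr₂, hs₂.trans hs₁, he₂⟩

theorem exists_sq_eq_one_of_sum_sq_eq_one_s8 {u : Fin n → ℤ} (h : ∑ k, u k ^ 2 = 1) :
    ∃ k, u k ^ 2 = 1 ∧ ∀ l ≠ k, u l = 0 := by
  obtain ⟨k, hk⟩ : ∃ k, u k ≠ 0 := by
    by_contra! h0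
    simp [h0] at h
  have hk1 : 1 ≤ u k ^ 2 := sq_pos_of_ne_zero hk
  have hrest : ∑ l ∈ Finset.univ.erase k, u l ^ 2 = 0 := by
    have hnonneg : 0 ≤ ∑ l ∈ Finset.univ.erase k, u l ^ 2 :=
      Finset.sum_nonneg fun l _ => sq_nonneg (u l)
    rw [← Finset.add_sum_erase _ _ (Finset.mem_univ k)] at h
    linarith
  rw [Finset.sum_eq_zero_iff_of_nonneg fun l _ => sq_nonneg (u l)] at hrest
  refine ⟨k, ?_, fun l hl => pow_eq_zero_iff two_ne_zero |>.1 (hrest l (by simpa using hl))⟩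
  rw [← Finset.add_sum_erase _ _ (Finset.mem_univ k), Finset.sum_eq_zero hrest] at h
  simpa using h

theorem reaches_single_of_sum_sq_eq_one (j : Fin n) {u : Fin n → ℤ} (h : ∑ k, u k ^ 2 = 1)
    (h1 : ∀ k, Odd (u k) → (u k : ZMod 4) = 1) :
    Reaches (dyadicVec 0 u) (Pi.single j 1) := by
  classical
  obtain ⟨k, hk, h0⟩ := exists_sq_eq_one_of_sum_sq_eq_one_s8 h
  have hk_one : u k = 1 := by
    rcases sq_eq_one_iff.1 hk with hk | hk
    · exact hk
    · have := h1 k (by simp [hk])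
      rw [hk] at this
      exact absurd this (by decide)
  have hu : dyadicVec 0 u = Pi.single k 1 := by
    ext l
    by_cases hl : l = k
    · subst hl; simp [dyadicVec, hk_one]
    · simp [dyadicVec, hl, h0 l hl]
  rw [hu]
  by_cases hkj : k = j
  · subst hkj; exact .refl
  · simpa [Pi.single_comp_equiv] using reaches_comp_swap (Pi.single k (1 : ℂ)) hkj

theorem reaches_single_of_sum_sq_eq_four_pow (j : Fin n) (q : ℕ) (u : Fin n → ℤ)
    (h : ∑ k, u k ^ 2 = 4 ^ q) : Reaches (dyadicVec q u) (Pi.single j 1) := by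
  induction q generalizing u with
  | zero =>
    obtain ⟨u₁, hr₁, hs₁, h1₁⟩ := exists_reaches_dyadicVec_odd_eq_one 0 u
    exact hr₁.trans (reaches_single_of_sum_sq_eq_one j (hs₁.trans h) h1₁)
  | succ q ih =>
    obtain ⟨u₁, hr₁, hs₁, h1₁⟩ := exists_reaches_dyadicVec_odd_eq_one (q + 1) u
    have h4 : 4 ∣ ∑ k, u₁ k ^ 2 := by rw [hs₁, h, pow_succ]; exact dvd_mul_left _ _
    obtain ⟨u₂, hr₂, hs₂, he₂⟩ := exists_reaches_dyadicVec_even (q + 1) u₁ h4 h1₁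
    choose u₃ hu₃ using fun k => even_iff_two_dvd.1 (he₂ k)
    have hu₂ : u₂ = fun k => 2 * u₃ k := funext hu₃
    have hs₃ : ∑ k, u₃ k ^ 2 = 4 ^ q := by
      have h₂ : ∑ k, u₂ k ^ 2 = 4 * ∑ k, u₃ k ^ 2 := by
        simp [hu₂, mul_pow, Finset.mul_sum]
      rw [hs₂, hs₁, h, pow_succ'] at h₂
      omega
    rw [hu₂, dyadicVec_succ_two_mul] at hr₂
    exact hr₁.trans (hr₂.trans (ih u₃ hs₃))

theorem exists_eq_dyadicVec {v : Fin n → ℂ} (hv : ∀ k, IsDyadic (v k)) :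
    ∃ (q : ℕ) (u : Fin n → ℤ), v = dyadicVec q u := by
  choose u q hu using hv
  refine ⟨Finset.univ.sup q, fun k => u k * 2 ^ (Finset.univ.sup q - q k), funext fun k => ?_⟩
  have hq : q k ≤ Finset.univ.sup q := Finset.le_sup (Finset.mem_univ k)
  rw [hu k, dyadicVec, ← Nat.sub_add_cancel hq, pow_add, Nat.add_sub_cancel]
  push_cast
  field_simp

theorem sum_sq_eq_four_pow_of_sum_conj_mul_eq_one {q : ℕ} {u : Fin n → ℤ}
    (h : ∑ k, starRingEnd ℂ (dyadicVec q u k) * dyadicVec q u k = 1) :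
    ∑ k, u k ^ 2 = 4 ^ q := by
  have hconj : ∀ k, starRingEnd ℂ (dyadicVec q u k) = dyadicVec q u k := fun k => by
    simp [dyadicVec, map_ofNat]
  simp only [hconj, ← sq, sum_sq_dyadicVec] at h
  rw [div_eq_one_iff_eq (pow_ne_zero _ (by norm_num))] at h
  exact_mod_cast h

end

theorem stmt8_general (n : ℕ) (j : Fin n) (v : Fin n → ℂ)
    (hunit : ∑ k, (starRingEnd ℂ) (v k) * v k = 1)
    (hD : ∀ k, IsDyadic (v k)) :
    ∃ L : List (Matrix (Fin n) (Fin n) ℂ),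
      (∀ G ∈ L, IsIntGen G) ∧
      L.prod.mulVec v = fun k => if k = j then (1 : ℂ) else 0 := by
  obtain ⟨q, u, rfl⟩ := exists_eq_dyadicVec hD
  have h := reaches_single_of_sum_sq_eq_four_pow j q u
    (sum_sq_eq_four_pow_of_sum_conj_mul_eq_one hunit)
  obtain ⟨L, hL, hLv⟩ := h.exists_list
  exact ⟨L, hL, hLv.trans (funext fun k => Pi.single_apply j 1 k)⟩

/-- Every unit vector over `ℤ[1/2]` can be reduced to any standard basis
vector `e_j` by generators `(-1)_[a]`, `X_[a,b]`, `(H⊗H)_[a,b,c,d]`. -/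
theorem stmt8 (n : ℕ) (hn : 1 ≤ n) (j : Fin n) (v : Fin n → ℂ)
    (hunit : ∑ k, (starRingEnd ℂ) (v k) * v k = 1)
    (hD : ∀ k, IsDyadic (v k)) :
    ∃ L : List (Matrix (Fin n) (Fin n) ℂ),
      (∀ G ∈ L, IsIntGen G) ∧
      L.prod.mulVec v = fun k => if k = j then (1 : ℂ) else 0 :=
  stmt8_general n j v hunit hD
end
end
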